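/- arXiv:1710.09780 — 3 statements merged into one kernel-verified Lean document; each statement's English description precedes it below -/
import Mathlib

section
/- Let N ≥ 2 be an integer and write L = (log₂ N)⁴ (the fourth power of the base-2 logarithm of N, rounded appropriately, e.g. L = ⌈log₂ N⌉⁴). Then N is prime if and only if the following three conditions all hold: (1) N is not a perfect power, i.e. there are no integers a ≥ 2 and b ≥ 2 with N = a^b; (2) N has no prime divisor p with p < N and p ≤ L; (3) for every pair of natural numbers r, a with 1 ≤ r < L and 1 ≤ a < L, the congruence of polynomials (X + a)^N ≡ X^N + a (mod X^r − 1) holds in the polynomial ring (ℤ/Nℤ)[X]. -/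
/-!
Suppose `N` passes the test but is composite; let `p` be its least prime factor, `N = M p` and
`ℓ = ⌈log₂ N⌉`. The congruences `(X + a) ^ m ≡ X ^ m + a (mod X ^ r - 1, p)` hold for `m = N` and
`m = p`, hence for `m = M` (Frobenius, and `X ^ r - 1` is squarefree) and for every `Mⁱ pʲ`.
Since `M` and `p` are multiplicatively independent, a size argument on `lcm (1, …, ℓ⁴)` gives
`r < ℓ⁴` for which the `Mⁱ pʲ` with `i, j < ℓ / 2` are distinct mod `r`; so the subgroup they
generate mod `r` has order `t ≥ ⌊ℓ / 2⌋²`. At a primitive `r`-th root of unity `θ` in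
characteristic `p`, products of `D < t` factors `X + a` take pairwise distinct values, and all of
them are roots of `X ^ m - X ^ m'` for two distinct `m, m' ≤ N ^ √t` with `m ≡ m' (mod r)`.
Hence `8 ^ D ≤ N ^ √t ≤ 2 ^ (ℓ √t)`, which fails for `D = ⌊ℓ √t / 3⌋ + 1`.
-/

open Polynomial Finset

/-- AKS's introspectivity of `m`, restricted to the linear polynomials `X + a` with `a < A`. -/
def IsIntrospective (R : Type*) [CommRing R] (r A m : ℕ) : Prop :=
  ∀ a < A, (X ^ r - 1 : R[X]) ∣ (X + C (a : R)) ^ m - (X ^ m + C (a : R))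

namespace IsIntrospective

variable {R : Type*} [CommRing R] {r A m n : ℕ}

theorem one : IsIntrospective R r A 1 := fun a _ ↦ by simp

theorem mul (hm : IsIntrospective R r A m) (hn : IsIntrospective R r A n) :
    IsIntrospective R r A (m * n) := by
  intro a ha
  have h₁ : (X ^ r - 1 : R[X]) ∣ ((X + C (a : R)) ^ m) ^ n - (X ^ m + C (a : R)) ^ n :=
    (hm a ha).trans (sub_dvd_pow_sub_pow _ _ n)
  -- substituting `X ^ m` for `X` in the congruence for `n` works modulo `X ^ (m * r) - 1`
  have h₂ : (X ^ r - 1 : R[X]) ∣ (X ^ m + C (a : R)) ^ n - (X ^ (m * n) + C (a : R)) := by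
    have h := map_dvd (expand R m) (hn a ha)
    simp only [map_sub, map_pow, map_add, map_one, expand_X, expand_C, ← pow_mul] at h
    have hr : (X ^ r - 1 : R[X]) ∣ X ^ (m * r) - 1 := by
      simpa [← pow_mul'] using sub_dvd_pow_sub_pow (X ^ r : R[X]) 1 m
    exact hr.trans h
  have hsplit : (X + C (a : R)) ^ (m * n) - (X ^ (m * n) + C (a : R)) =
      (((X + C (a : R)) ^ m) ^ n - (X ^ m + C (a : R)) ^ n) +
        ((X ^ m + C (a : R)) ^ n - (X ^ (m * n) + C (a : R))) := by
    rw [pow_mul]; ring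
  rw [hsplit]
  exact dvd_add h₁ h₂

theorem pow_mul_pow (hm : IsIntrospective R r A m) (hn : IsIntrospective R r A n) (i j : ℕ) :
    IsIntrospective R r A (m ^ i * n ^ j) := by
  induction i with
  | zero =>
    induction j with
    | zero => simpa using one
    | succ j ih => simpa [pow_succ, ← mul_assoc] using ih.mul hn
  | succ i ih => simpa [pow_succ, mul_right_comm _ m] using ih.mul hm

theorem map {S : Type*} [CommRing S] (f : R →+* S) (hm : IsIntrospective R r A m) :
    IsIntrospective S r A m := fun a ha ↦ by
  simpa using Polynomial.map_dvd f (hm a ha)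

theorem aeval_eq {S : Type*} [CommRing S] [Algebra R S] (hm : IsIntrospective R r A m)
    {z : S} (hz : z ^ r = 1) {a : ℕ} (ha : a < A) : (z + a) ^ m = z ^ m + a := by
  obtain ⟨q, hq⟩ := hm a ha
  simpa [hz, sub_eq_zero] using congrArg (aeval z) hq

theorem of_mul_char {p : ℕ} [Fact p.Prime] (hr : (r : ZMod p) ≠ 0)
    (h : IsIntrospective (ZMod p) r A (m * p)) : IsIntrospective (ZMod p) r A m := by
  intro a ha
  have hsq : Squarefree (X ^ r - 1 : (ZMod p)[X]) := by
    simpa using (separable_X_pow_sub_C (1 : ZMod p) hr one_ne_zero).squarefree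
  have hfrob : ((X + C (a : ZMod p)) ^ m - (X ^ m + C (a : ZMod p))) ^ p =
      (X + C (a : ZMod p)) ^ (m * p) - (X ^ (m * p) + C (a : ZMod p)) := by
    rw [sub_pow_char _ _ (p := p), add_pow_char _ _ p, ← C_pow, ZMod.pow_card, pow_mul, pow_mul]
  rw [← hsq.dvd_pow_iff_dvd (Fact.out : p.Prime).ne_zero, hfrob]
  exact h a ha

theorem of_pos (h : ∀ a, 0 < a → a < A →
      (X ^ r - 1 : R[X]) ∣ (X + C (a : R)) ^ m - (X ^ m + C (a : R))) :
    IsIntrospective R r A m := fun a ha ↦ by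
  rcases Nat.eq_zero_or_pos a with rfl | ha₀
  · simp
  · exact h a ha₀ ha

end IsIntrospective

theorem isIntrospective_char (p : ℕ) [Fact p.Prime] (r A : ℕ) :
    IsIntrospective (ZMod p) r A p := fun a _ ↦ by
  rw [add_pow_char, ← C_pow, ZMod.pow_card, sub_self]
  exact dvd_zero _

section Counting

variable {R : Type*} [CommRing R] [IsDomain R]

theorem Polynomial.prod_X_add_C_injective {ι κ : Type*} [Fintype ι] {e : ι × κ → R}
    (he : Function.Injective e) :
    Function.Injective fun f : ι → κ ↦ ∏ i, (X + C (e (i, f i))) := by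
  intro f g (hfg : ∏ i, (X + C (e (i, f i))) = ∏ i, (X + C (e (i, g i))))
  funext i
  have hroot : ((∏ j, (X + C (e (j, g j)))).eval (-e (i, f i))) = 0 := by
    rw [← hfg, eval_prod]
    exact prod_eq_zero (mem_univ i) (by simp)
  obtain ⟨j, -, hj⟩ := prod_eq_zero_iff.mp (by simpa [eval_prod] using hroot)
  have := he (neg_add_eq_zero.mp hj)
  simp only [Prod.mk.injEq] at this
  obtain ⟨rfl, h⟩ := this
  exact h

theorem Finset.card_le_of_pow_eq_pow {s : Finset R} {m n : ℕ} (hmn : m ≠ n)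
    (hs : ∀ x ∈ s, x ^ m = x ^ n) : s.card ≤ max m n := by
  wlog h : n < m generalizing m n
  · simpa [max_comm] using this hmn.symm (fun x hx ↦ (hs x hx).symm) (by omega)
  have hdeg : (X ^ m - X ^ n : R[X]).natDegree = m := by
    rw [natDegree_sub_eq_left_of_natDegree_lt] <;> simp [h]
  have hne : (X ^ m - X ^ n : R[X]) ≠ 0 := by
    intro h0; rw [h0, natDegree_zero] at hdeg; omega
  calc s.card ≤ (X ^ m - X ^ n : R[X]).natDegree :=
        card_le_degree_of_subset_roots fun x hx ↦ by
          simp [mem_roots hne, hs x (Finset.mem_def.mpr hx)]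
    _ ≤ max m n := by omega

theorem Polynomial.injOn_eval_of_eval_eq_pow {ι : Type*} [Fintype ι] {K : Set R[X]} (θ : R)
    {g : ι → R} (hg : Function.Injective g) (hgK : ∀ i, ∃ m, ∀ f ∈ K, f.eval (g i) = f.eval θ ^ m)
    (hdeg : ∀ f ∈ K, f.natDegree < Fintype.card ι) : Set.InjOn (eval θ) K := by
  intro f hf f' hf' hθ
  rw [← sub_eq_zero]
  refine eq_zero_of_natDegree_lt_card_of_eval_eq_zero _ hg (fun i ↦ ?_) ?_
  · obtain ⟨m, hm⟩ := hgK i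
    simp [hm f hf, hm f' hf', hθ]
  · exact (natDegree_sub_le _ _).trans_lt (max_lt (hdeg f hf) (hdeg f' hf'))

end Counting

section LetterProducts

variable (R : Type*) [CommRing R] (D w : ℕ)

/-- The `i`-th factor is `X + (w * i + f i)`: its constant is taken from the `i`-th block of `w`
naturals, so distinct `f` give distinct sets of roots. -/
noncomputable def letterProduct (f : Fin D → Fin w) : R[X] :=
  ∏ i, (X + C ((finProdFinEquiv (i, f i) : ℕ) : R))

variable {R D w}

theorem natDegree_letterProduct_le [Nontrivial R] (f : Fin D → Fin w) :
    (letterProduct R D w f).natDegree ≤ D :=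
  (natDegree_prod_le _ _).trans (by simp only [natDegree_X_add_C, sum_const, card_univ,
    Fintype.card_fin, smul_eq_mul, mul_one, le_refl])

theorem letterProduct_injective [IsDomain R] {p : ℕ} [CharP R p] (h : D * w ≤ p) :
    Function.Injective (letterProduct R D w) := by
  refine prod_X_add_C_injective (e := fun ia ↦ ((finProdFinEquiv ia : ℕ) : R))
    fun ia ib hab ↦ finProdFinEquiv.injective (Fin.ext ?_)
  exact CharP.natCast_injOn_Iio R p (by simpa using (finProdFinEquiv ia).isLt.trans_le h)
    (by simpa using (finProdFinEquiv ib).isLt.trans_le h) hab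

theorem IsIntrospective.eval_letterProduct_pow {S : Type*} [CommRing S] [Algebra R S]
    {r A m : ℕ} (hm : IsIntrospective R r A m) (hA : D * w ≤ A) {z : S} (hz : z ^ r = 1)
    (f : Fin D → Fin w) :
    (letterProduct S D w f).eval (z ^ m) = (letterProduct S D w f).eval z ^ m := by
  simp only [letterProduct, eval_prod, eval_add, eval_X, eval_C, ← prod_pow]
  exact prod_congr rfl fun i _ ↦
    (hm.aeval_eq hz ((finProdFinEquiv (i, f i)).isLt.trans_le hA)).symm

end LetterProducts

section MultiplicativelyIndependent

variable {a b : ℕ}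

theorem pow_mul_pow_eq_pow_mul_pow {G : Type*} [CommMonoid G] {u v : G} (hu : IsLeftRegular u)
    (hv : IsLeftRegular v) {i j i' j' : ℕ} (hi : i' ≤ i) (h : u ^ i * v ^ j = u ^ i' * v ^ j') :
    (j ≤ j' → u ^ (i - i') = v ^ (j' - j)) ∧ (j' ≤ j → u ^ (i - i') * v ^ (j - j') = 1) := by
  obtain ⟨x, rfl⟩ := Nat.exists_eq_add_of_le hi
  rw [pow_add, mul_assoc] at h
  replace h := hu.pow i' h
  simp only [add_tsub_cancel_left]
  refine ⟨fun hj ↦ ?_, fun hj ↦ ?_⟩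
  · obtain ⟨y, rfl⟩ := Nat.exists_eq_add_of_le hj
    rw [pow_add, mul_comm] at h
    simpa using hv.pow j h
  · obtain ⟨y, rfl⟩ := Nat.exists_eq_add_of_le hj
    rw [pow_add, mul_left_comm] at h
    simpa using hv.pow j' (h.trans (mul_one _).symm)

theorem Nat.pow_mul_pow_injective (ha : 0 < a) (hb : 0 < b)
    (hab : ∀ x y, a ^ x = b ^ y → x = 0 ∧ y = 0) :
    Function.Injective fun ij : ℕ × ℕ ↦ a ^ ij.1 * b ^ ij.2 := by
  suffices ∀ i j i' j', i' ≤ i → a ^ i * b ^ j = a ^ i' * b ^ j' → i = i' ∧ j = j' by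
    rintro ⟨i, j⟩ ⟨i', j'⟩ h
    rcases le_total i' i with hi | hi
    · simpa using this i j i' j' hi h
    · simpa [eq_comm] using this i' j' i j hi h.symm
  intro i j i' j' hi h
  have h := pow_mul_pow_eq_pow_mul_pow (IsRegular.of_ne_zero ha.ne').left
    (IsRegular.of_ne_zero hb.ne').left hi h
  rcases le_total j j' with hj | hj
  · have := hab _ _ (h.1 hj)
    omega
  · obtain ⟨hx, hy⟩ := mul_eq_one.mp (h.2 hj)
    have := hab _ 0 (by simpa using hx)
    have := hab 0 _ (by simpa using hy.symm)
    omega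

/-- After cancelling, a collision `aⁱ bʲ ≡ aⁱ' bʲ' (mod r)` with exponents below `c` and `r`
coprime to `a b` becomes `aˣ bʸ ≡ 1` or `aˣ ≡ bʸ` for some `(x, y) ≠ (0, 0)` below `c`. -/
def collisionProduct (a b c : ℕ) : ℤ :=
  ∏ xy ∈ (range c ×ˢ range c).erase (0, 0),
    ((a : ℤ) ^ xy.1 * b ^ xy.2 - 1) * (a ^ xy.1 - b ^ xy.2)

theorem collisionProduct_ne_zero
    (hab : ∀ x y, a ^ x = b ^ y → x = 0 ∧ y = 0) (c : ℕ) : collisionProduct a b c ≠ 0 := by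
  refine prod_ne_zero_iff.mpr fun ⟨x, y⟩ hxy ↦ mul_ne_zero ?_ ?_
  all_goals
    rw [sub_ne_zero]
    norm_cast
    intro h
    rw [mem_erase, ne_eq, Prod.mk.injEq] at hxy
  · obtain ⟨hx, hy⟩ := mul_eq_one.mp h
    exact hxy.1 ⟨(hab x 0 (by simpa using hx)).1, (hab 0 y (by simpa using hy.symm)).2⟩
  · exact hxy.1 (hab x y h)

theorem abs_collisionProduct_le (ha : 0 < a) (hb : 0 < b) (c : ℕ) :
    |collisionProduct a b c| ≤ ((a * b : ℕ) : ℤ) ^ (2 * c ^ 3) := by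
  have hfactor : ∀ x < c, ∀ y < c,
      |((a : ℤ) ^ x * b ^ y - 1) * (a ^ x - b ^ y)| ≤ ((a * b : ℕ) : ℤ) ^ (2 * c) := by
    intro x hx y hy
    have ha' : (1 : ℤ) ≤ a ^ x := one_le_pow₀ (by exact_mod_cast ha)
    have hb' : (1 : ℤ) ≤ b ^ y := one_le_pow₀ (by exact_mod_cast hb)
    have hP : (a : ℤ) ^ x * b ^ y ≤ ((a * b : ℕ) : ℤ) ^ c := by
      push_cast
      rw [mul_pow]
      gcongr <;> omega
    have h₁ : |(a : ℤ) ^ x * b ^ y - 1| ≤ a ^ x * b ^ y :=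
      abs_sub_le_of_nonneg_of_le (by positivity) le_rfl zero_le_one (by nlinarith)
    have h₂ : |(a : ℤ) ^ x - b ^ y| ≤ a ^ x * b ^ y :=
      abs_sub_le_of_nonneg_of_le (by positivity) (by nlinarith) (by positivity) (by nlinarith)
    rw [abs_mul, pow_mul', sq]
    gcongr <;> linarith
  have hcard : ((range c ×ˢ range c).erase (0, 0)).card ≤ c ^ 2 :=
    (card_erase_le).trans (by simp [sq])
  calc |collisionProduct a b c|
      = ∏ xy ∈ (range c ×ˢ range c).erase (0, 0),
          |((a : ℤ) ^ xy.1 * b ^ xy.2 - 1) * (a ^ xy.1 - b ^ xy.2)| := abs_prod _ _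
    _ ≤ ∏ _xy ∈ (range c ×ˢ range c).erase (0, 0), ((a * b : ℕ) : ℤ) ^ (2 * c) :=
        prod_le_prod (fun _ _ ↦ abs_nonneg _) fun xy hxy ↦ by
          simp only [mem_erase, mem_product, mem_range] at hxy
          exact hfactor _ hxy.2.1 _ hxy.2.2
    _ ≤ ((a * b : ℕ) : ℤ) ^ (2 * c ^ 3) := by
        rw [prod_const, ← pow_mul, show 2 * c ^ 3 = 2 * c * c ^ 2 by ring]
        exact pow_le_pow_right₀ (by exact_mod_cast Nat.mul_pos ha hb) (by gcongr)

theorem dvd_collisionProduct {c r : ℕ} (hr : Nat.Coprime (a * b) r)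
    (h : ¬ Set.InjOn (fun ij : ℕ × ℕ ↦ (a : ZMod r) ^ ij.1 * (b : ZMod r) ^ ij.2)
      (range c ×ˢ range c)) :
    (r : ℤ) ∣ collisionProduct a b c := by
  have hreg (n : ℕ) (hn : n.Coprime r) : IsLeftRegular (n : ZMod r) :=
    ((ZMod.isUnit_iff_coprime n r).mpr hn).isRegular.left
  have key : ∀ i j i' j', i < c → j < c → i' < c → j' < c → (i, j) ≠ (i', j') → i' ≤ i →
      (a : ZMod r) ^ i * (b : ZMod r) ^ j = (a : ZMod r) ^ i' * (b : ZMod r) ^ j' →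
      ((collisionProduct a b c : ℤ) : ZMod r) = 0 := by
    intro i j i' j' hi hj hi' hj' hne hii h
    have h := pow_mul_pow_eq_pow_mul_pow (hreg a (Nat.Coprime.coprime_mul_right hr))
      (hreg b (Nat.Coprime.coprime_mul_left hr)) hii h
    simp only [collisionProduct, Int.cast_prod, Int.cast_mul, Int.cast_sub, Int.cast_pow,
      Int.cast_natCast, Int.cast_one]
    rw [ne_eq, Prod.mk.injEq] at hne
    rcases le_total j j' with hjj | hjj
    · refine prod_eq_zero (i := (i - i', j' - j)) ?_ (by simp [h.1 hjj])
      simp only [mem_erase, mem_product, mem_range, ne_eq, Prod.mk.injEq]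
      omega
    · refine prod_eq_zero (i := (i - i', j - j')) ?_ (by simp [h.2 hjj])
      simp only [mem_erase, mem_product, mem_range, ne_eq, Prod.mk.injEq]
      omega
  rw [← ZMod.intCast_zmod_eq_zero_iff_dvd]
  simp only [Set.InjOn, not_forall] at h
  obtain ⟨⟨i, j⟩, hij, ⟨i', j'⟩, hij', heq, hne⟩ := h
  simp only [coe_range, Set.mem_prod, Set.mem_Iio] at hij hij'
  rcases le_total i' i with hi | hi
  · exact key i j i' j' hij.1 hij.2 hij'.1 hij'.2 hne hi heq
  · exact key i' j' i j hij'.1 hij'.2 hij.1 hij.2 (Ne.symm hne) hi heq.symm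

theorem Nat.pow_four_le_two_pow {k : ℕ} (hk : 16 ≤ k) : k ^ 4 ≤ 2 ^ k := by
  induction k, hk using Nat.le_induction with
  | base => norm_num
  | succ k hk ih =>
    have h16 : 16 * k ^ 3 ≤ k ^ 4 := by
      calc 16 * k ^ 3 ≤ k * k ^ 3 := Nat.mul_le_mul_right _ hk
        _ = k ^ 4 := by ring
    calc (k + 1) ^ 4 ≤ 2 * k ^ 4 := by nlinarith [pow_pos (by omega : 0 < k) 2]
      _ ≤ 2 ^ (k + 1) := by rw [pow_succ 2 k]; omega

theorem Nat.two_pow_pow_lt_lcmUpto {ℓ : ℕ} (hℓ : 16 ≤ ℓ) :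
    (2 ^ ℓ) ^ (2 * (ℓ / 2) ^ 3) < Nat.lcmUpto (ℓ ^ 4 - 1) := by
  set c := ℓ / 2
  by_contra! h
  have h2 : 2 ^ (ℓ ^ 4 - 1) ≤ 2 ^ (ℓ + ℓ * (2 * c ^ 3)) :=
    calc 2 ^ (ℓ ^ 4 - 1) ≤ (ℓ ^ 4 - 1 + 1) * Nat.lcmUpto (ℓ ^ 4 - 1) :=
          Chebyshev.two_pow_le_mul_lcmUpto _
      _ ≤ 2 ^ ℓ * (2 ^ ℓ) ^ (2 * c ^ 3) := by
          refine Nat.mul_le_mul ?_ h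
          rw [Nat.sub_add_cancel (Nat.one_le_pow _ _ (by omega))]
          exact Nat.pow_four_le_two_pow hℓ
      _ = _ := by rw [pow_add, ← pow_mul]
  have h8 : 4 * (ℓ * (2 * c ^ 3)) ≤ ℓ ^ 4 := by
    have : (2 * c) ^ 3 ≤ ℓ ^ 3 := by gcongr; omega
    calc 4 * (ℓ * (2 * c ^ 3)) = ℓ * (2 * c) ^ 3 := by ring
      _ ≤ ℓ * ℓ ^ 3 := by gcongr
      _ = ℓ ^ 4 := by ring
  have hℓ4 : 4 * ℓ ≤ ℓ ^ 4 := by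
    calc 4 * ℓ ≤ ℓ * ℓ := by gcongr; omega
      _ ≤ ℓ ^ 4 := by rw [← sq]; exact Nat.pow_le_pow_right (by omega) (by norm_num)
  have := (Nat.pow_le_pow_iff_right (by norm_num)).mp h2
  omega

theorem exists_injOn_pow_mul_pow_zmod {ℓ : ℕ} (ha : 0 < a) (hb : 0 < b)
    (hab : ∀ x y, a ^ x = b ^ y → x = 0 ∧ y = 0) (hℓ : 16 ≤ ℓ) (hsize : a * b ≤ 2 ^ ℓ)
    (hcop : ∀ r, r ≠ 0 → r < ℓ ^ 4 → Nat.Coprime (a * b) r) :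
    ∃ r, r ≠ 0 ∧ r < ℓ ^ 4 ∧
      Set.InjOn (fun ij : ℕ × ℕ ↦ (a : ZMod r) ^ ij.1 * (b : ZMod r) ^ ij.2)
        (range (ℓ / 2) ×ˢ range (ℓ / 2)) := by
  by_contra! hcon
  set P := collisionProduct a b (ℓ / 2)
  have hlcm : Nat.lcmUpto (ℓ ^ 4 - 1) ∣ P.natAbs :=
    Finset.lcm_dvd fun r hr ↦ by
      rw [mem_Icc] at hr
      exact Int.natCast_dvd.mp
        (dvd_collisionProduct (hcop r (by omega) (by omega)) (hcon r (by omega) (by omega)))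
  have hP : P.natAbs ≤ (2 ^ ℓ) ^ (2 * (ℓ / 2) ^ 3) := by
    have : (P.natAbs : ℤ) ≤ ((2 ^ ℓ : ℕ) : ℤ) ^ (2 * (ℓ / 2) ^ 3) := by
      rw [Int.natCast_natAbs]
      exact (abs_collisionProduct_le ha hb _).trans (by gcongr)
    exact_mod_cast this
  exact (Nat.two_pow_pow_lt_lcmUpto hℓ).not_ge
    ((Nat.le_of_dvd (Int.natAbs_pos.mpr (collisionProduct_ne_zero hab _)) hlcm).trans hP)

end MultiplicativelyIndependent

theorem Submonoid.card_le_of_injOn_pow_mul_pow {G : Type*} [CommMonoid G] (x y : G)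
    [Finite (closure ({x, y} : Set G))] {s : Finset (ℕ × ℕ)}
    (hs : Set.InjOn (fun ij : ℕ × ℕ ↦ x ^ ij.1 * y ^ ij.2) s) :
    s.card ≤ Nat.card (closure ({x, y} : Set G)) := by
  rw [← Set.ncard_coe_finset, ← hs.ncard_image, ← SetLike.coe_sort_coe, Nat.card_coe_set_eq]
  refine Set.ncard_le_ncard ?_ (Set.toFinite _)
  rintro _ ⟨ij, -, rfl⟩
  exact (mem_closure_pair x y _).mpr ⟨ij.1, ij.2, rfl⟩

theorem Submonoid.exists_ne_pow_mul_pow_eq {G : Type*} [CommMonoid G] (x y : G)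
    [Finite (closure ({x, y} : Set G))] :
    ∃ i j i' j' : ℕ, (i, j) ≠ (i', j') ∧ i ≤ Nat.sqrt (Nat.card (closure ({x, y} : Set G))) ∧
      j ≤ Nat.sqrt (Nat.card (closure ({x, y} : Set G))) ∧
      i' ≤ Nat.sqrt (Nat.card (closure ({x, y} : Set G))) ∧
      j' ≤ Nat.sqrt (Nat.card (closure ({x, y} : Set G))) ∧ x ^ i * y ^ j = x ^ i' * y ^ j' := by
  set u := Nat.sqrt (Nat.card (closure ({x, y} : Set G)))
  have h : ¬ Set.InjOn (fun ij : ℕ × ℕ ↦ x ^ ij.1 * y ^ ij.2) ↑(range (u + 1) ×ˢ range (u + 1)) :=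
    fun h ↦ by
      have := card_le_of_injOn_pow_mul_pow x y h
      rw [card_product, card_range, ← sq] at this
      exact (Nat.lt_succ_sqrt' _).not_ge this
  simp only [Set.InjOn, not_forall, coe_product, coe_range, Set.mem_prod, Set.mem_Iio] at h
  obtain ⟨⟨i, j⟩, ⟨hi, hj⟩, ⟨i', j'⟩, ⟨hi', hj'⟩, heq, hne⟩ := h
  exact ⟨i, j, i', j', hne, by omega, by omega, by omega, by omega, heq⟩

theorem IsPrimitiveRoot.pow_val_natCast {K : Type*} [CommMonoid K] {θ : K} {r : ℕ} [NeZero r]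
    (hθ : IsPrimitiveRoot θ r) (n : ℕ) : θ ^ (n : ZMod r).val = θ ^ n := by
  rw [ZMod.val_natCast, hθ.eq_orderOf, pow_mod_orderOf]

section AKS

variable {R F : Type*} [CommRing R] [Field F] [Algebra R F] {a b r A D w : ℕ} {θ : F}

theorem injOn_eval_letterProduct [NeZero r] (hθ : IsPrimitiveRoot θ r)
    (hab : ∀ i j, IsIntrospective R r A (a ^ i * b ^ j)) (hA : D * w ≤ A)
    (hD : D < Nat.card (Submonoid.closure ({(a : ZMod r), (b : ZMod r)} : Set (ZMod r)))) :
    Set.InjOn (eval θ) (Set.range (letterProduct F D w)) := by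
  set T := Submonoid.closure ({(a : ZMod r), (b : ZMod r)} : Set (ZMod r))
  have := Fintype.ofFinite T
  refine injOn_eval_of_eval_eq_pow θ (g := fun z : T ↦ θ ^ (z : ZMod r).val) ?_ ?_ ?_
  · intro z z' h
    exact Subtype.ext (ZMod.val_injective r (hθ.pow_inj (ZMod.val_lt _) (ZMod.val_lt _) h))
  · rintro ⟨z, hz⟩
    obtain ⟨i, j, rfl⟩ := (Submonoid.mem_closure_pair _ _ _).mp hz
    refine ⟨a ^ i * b ^ j, ?_⟩
    rintro _ ⟨f, rfl⟩
    rw [← (hab i j).eval_letterProduct_pow hA hθ.pow_eq_one,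
      ← hθ.pow_val_natCast (a ^ i * b ^ j)]
    push_cast
    rfl
  · rintro _ ⟨f, rfl⟩
    exact (natDegree_letterProduct_le f).trans_lt (Fintype.card_eq_nat_card ▸ hD)

theorem pow_le_of_isPrimitiveRoot {p : ℕ} [CharP F p] [NeZero r] (hθ : IsPrimitiveRoot θ r)
    (ha : 0 < a) (hb : 0 < b) (hind : ∀ x y, a ^ x = b ^ y → x = 0 ∧ y = 0)
    (hab : ∀ i j, IsIntrospective R r A (a ^ i * b ^ j)) (hAp : A ≤ p) (hA : D * w ≤ A)
    (hD : D < Nat.card (Submonoid.closure ({(a : ZMod r), (b : ZMod r)} : Set (ZMod r)))) :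
    w ^ D ≤ (a * b) ^ Nat.sqrt
      (Nat.card (Submonoid.closure ({(a : ZMod r), (b : ZMod r)} : Set (ZMod r)))) := by
  classical
  set u := Nat.sqrt (Nat.card (Submonoid.closure ({(a : ZMod r), (b : ZMod r)} : Set (ZMod r))))
  obtain ⟨i, j, i', j', hne, hi, hj, hi', hj', heq⟩ :=
    Submonoid.exists_ne_pow_mul_pow_eq (a : ZMod r) (b : ZMod r)
  have hne' : a ^ i * b ^ j ≠ a ^ i' * b ^ j' :=
    fun h ↦ hne (Nat.pow_mul_pow_injective ha hb hind h)
  have hθeq : θ ^ (a ^ i * b ^ j) = θ ^ (a ^ i' * b ^ j') := by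
    rw [← hθ.pow_val_natCast, ← hθ.pow_val_natCast (a ^ i' * b ^ j')]
    push_cast
    rw [heq]
  have hinj : Function.Injective fun f ↦ (letterProduct F D w f).eval θ := fun f g h ↦
    letterProduct_injective (hA.trans hAp)
      (injOn_eval_letterProduct hθ hab hA hD ⟨f, rfl⟩ ⟨g, rfl⟩ h)
  have hroots : ∀ y ∈ univ.image fun f ↦ (letterProduct F D w f).eval θ,
      y ^ (a ^ i * b ^ j) = y ^ (a ^ i' * b ^ j') := by
    intro _ hy
    obtain ⟨f, -, rfl⟩ := mem_image.mp hy
    rw [← (hab i j).eval_letterProduct_pow hA hθ.pow_eq_one,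
      ← (hab i' j').eval_letterProduct_pow hA hθ.pow_eq_one, hθeq]
  have hle (k l : ℕ) (hk : k ≤ u) (hl : l ≤ u) : a ^ k * b ^ l ≤ (a * b) ^ u := by
    rw [mul_pow]
    exact Nat.mul_le_mul (Nat.pow_le_pow_right ha hk) (Nat.pow_le_pow_right hb hl)
  calc w ^ D = (univ.image fun f ↦ (letterProduct F D w f).eval θ).card := by
        rw [card_image_of_injective _ hinj]
        simp
    _ ≤ max (a ^ i * b ^ j) (a ^ i' * b ^ j') := card_le_of_pow_eq_pow hne' hroots
    _ ≤ (a * b) ^ u := max_le (hle i j hi hj) (hle i' j' hi' hj')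

end AKS

theorem pow_le_of_isIntrospective {p a r A D w : ℕ} [Fact p.Prime] (hrp : (r : ZMod p) ≠ 0)
    (ha : 0 < a) (hind : ∀ x y, a ^ x = p ^ y → x = 0 ∧ y = 0)
    (h : IsIntrospective (ZMod p) r A (a * p)) (hAp : A ≤ p) (hA : D * w ≤ A)
    (hD : D < Nat.card (Submonoid.closure ({(a : ZMod r), (p : ZMod r)} : Set (ZMod r)))) :
    w ^ D ≤ (a * p) ^ Nat.sqrt
      (Nat.card (Submonoid.closure ({(a : ZMod r), (p : ZMod r)} : Set (ZMod r)))) := by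
  have : NeZero r := ⟨by rintro rfl; exact hrp Nat.cast_zero⟩
  have : NeZero (r : ZMod p) := ⟨hrp⟩
  have : CharP (CyclotomicField r (ZMod p)) p := charP_of_injective_algebraMap' (ZMod p) p
  exact pow_le_of_isPrimitiveRoot
    (IsCyclotomicExtension.zeta_spec r (ZMod p) (CyclotomicField r (ZMod p))) ha
    (Fact.out : p.Prime).pos hind ((h.of_mul_char hrp).pow_mul_pow (isIntrospective_char p r A))
    hAp hA hD

theorem exists_aks_degree {ℓ t : ℕ} (hℓ : 16 ≤ ℓ) (hct : (ℓ / 2) ^ 2 ≤ t) (htℓ : t < ℓ ^ 4) :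
    ∃ D, D < t ∧ D * 8 ≤ ℓ ^ 4 ∧ 2 ^ (ℓ * Nat.sqrt t) < 8 ^ D := by
  set u := Nat.sqrt t
  have hu : ℓ / 2 ≤ u := Nat.le_sqrt'.mpr hct
  have hut : u ^ 2 ≤ t := Nat.sqrt_le' t
  have huℓ : u < ℓ ^ 2 := Nat.sqrt_lt'.mpr (by rwa [← pow_mul])
  have h₁ : ℓ * u ≤ 2 * u ^ 2 + u := by
    calc ℓ * u ≤ (2 * u + 1) * u := Nat.mul_le_mul_right _ (by omega)
      _ = 2 * u ^ 2 + u := by ring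
  have h₂ : 8 * u ≤ u ^ 2 := by
    rw [sq]
    exact Nat.mul_le_mul_right _ (by omega)
  have h₃ : ℓ * u ≤ ℓ ^ 3 := by nlinarith
  have h₄ : 16 * ℓ ^ 3 ≤ ℓ ^ 4 := by nlinarith [pow_pos (by omega : 0 < ℓ) 3]
  refine ⟨ℓ * u / 3 + 1, by omega, by omega, ?_⟩
  rw [show (8 : ℕ) = 2 ^ 3 by rfl, ← pow_mul]
  exact Nat.pow_lt_pow_right (by norm_num) (by omega)

theorem Nat.eq_zero_of_div_minFac_pow_eq_minFac_pow {N : ℕ} (hN : 2 ≤ N) (hNp : ¬ N.Prime)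
    (h : ¬ ∃ a b : ℕ, 2 ≤ a ∧ 2 ≤ b ∧ N = a ^ b) (x y : ℕ)
    (hxy : (N / N.minFac) ^ x = N.minFac ^ y) : x = 0 ∧ y = 0 := by
  have hp := Nat.minFac_prime (by omega : N ≠ 1)
  have hNM : N / N.minFac * N.minFac = N := Nat.div_mul_cancel N.minFac_dvd
  have hx : x = 0 := by
    by_contra hx
    obtain ⟨k, -, hk⟩ := (Nat.dvd_prime_pow hp).mp (hxy ▸ dvd_pow_self _ hx)
    rcases k with _ | k
    · rw [hk, pow_zero, one_mul] at hNM
      exact hNp (hNM ▸ hp)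
    · refine h ⟨N.minFac, k + 2, hp.two_le, by omega, ?_⟩
      calc N = N / N.minFac * N.minFac := hNM.symm
        _ = N.minFac ^ (k + 2) := by rw [hk, ← pow_succ]
  subst hx
  exact ⟨rfl, (Nat.pow_eq_one.mp hxy.symm).resolve_left hp.one_lt.ne'⟩

theorem Nat.sixteen_le_clog_of_pow_four_lt_minFac {N : ℕ} (hN : 2 ≤ N) (hNp : ¬ N.Prime)
    (h : Nat.clog 2 N ^ 4 < N.minFac) : 16 ≤ Nat.clog 2 N := by
  have hsmall : ∀ k < 16, 0 < k → 2 ^ k < (k ^ 4 + 1) ^ 2 := by decide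
  have : (Nat.clog 2 N ^ 4 + 1) ^ 2 ≤ 2 ^ Nat.clog 2 N :=
    (Nat.pow_le_pow_left h 2).trans
      ((Nat.minFac_sq_le_self (by omega) hNp).trans (Nat.le_pow_clog one_lt_two N))
  by_contra h'
  exact (hsmall _ (by omega) (Nat.clog_pos one_lt_two (by omega))).not_ge this

theorem prime_of_aks_conditions {N : ℕ} (hN : 2 ≤ N)
    (h₁ : ¬ ∃ a b : ℕ, 2 ≤ a ∧ 2 ≤ b ∧ N = a ^ b)
    (h₂ : ¬ ∃ p : ℕ, p.Prime ∧ p ∣ N ∧ p < N ∧ p ≤ (Nat.clog 2 N) ^ 4)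
    (h₃ : ∀ r a : ℕ, 1 ≤ r → r < (Nat.clog 2 N) ^ 4 → 1 ≤ a → a < (Nat.clog 2 N) ^ 4 →
      (X ^ r - 1 : (ZMod N)[X]) ∣ ((X + C (a : ZMod N)) ^ N - (X ^ N + C (a : ZMod N)))) :
    N.Prime := by
  by_contra hNp
  set ℓ := Nat.clog 2 N
  set p := N.minFac
  set M := N / p
  have hp : p.Prime := Nat.minFac_prime (by omega)
  have : Fact p.Prime := ⟨hp⟩
  have hNM : M * p = N := Nat.div_mul_cancel N.minFac_dvd
  have hpℓ : ℓ ^ 4 < p := not_le.mp fun h ↦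
    h₂ ⟨p, hp, N.minFac_dvd, (Nat.not_prime_iff_minFac_lt hN).mp hNp, h⟩
  have hN2 : N ≤ 2 ^ ℓ := Nat.le_pow_clog one_lt_two N
  have hℓ : 16 ≤ ℓ := Nat.sixteen_le_clog_of_pow_four_lt_minFac hN hNp hpℓ
  have hind := Nat.eq_zero_of_div_minFac_pow_eq_minFac_pow hN hNp h₁
  have hM : 0 < M := Nat.pos_of_ne_zero fun h ↦ by simp [h] at hNM; omega
  obtain ⟨r, hr, hrℓ, hinj⟩ := exists_injOn_pow_mul_pow_zmod hM hp.pos hind hℓ (hNM ▸ hN2)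
    fun r hr hrℓ ↦ hNM ▸ Nat.coprime_of_lt_minFac hr (by omega)
  have : NeZero r := ⟨hr⟩
  set t := Nat.card (Submonoid.closure ({(M : ZMod r), (p : ZMod r)} : Set (ZMod r)))
  have hct : (ℓ / 2) ^ 2 ≤ t := by
    have := Submonoid.card_le_of_injOn_pow_mul_pow _ _ (by rwa [coe_product])
    rwa [card_product, card_range, ← sq] at this
  have htr : t ≤ r :=
    (Nat.card_le_card_of_injective (Subtype.val : _ → ZMod r) Subtype.val_injective).trans_eq
      (Nat.card_zmod r)
  obtain ⟨D, hDt, hD8, hbig⟩ := exists_aks_degree hℓ hct (by omega)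
  have hrp : (r : ZMod p) ≠ 0 := by
    rw [Ne, ZMod.natCast_eq_zero_iff]
    exact fun h ↦ (Nat.le_of_dvd (by omega) h).not_gt (by omega)
  have hN : IsIntrospective (ZMod N) r (ℓ ^ 4) N :=
    .of_pos fun a ha₀ ha ↦ h₃ r a (by omega) (by omega) ha₀ ha
  have hMp : IsIntrospective (ZMod p) r (ℓ ^ 4) (M * p) :=
    hNM ▸ hN.map (ZMod.castHom N.minFac_dvd (ZMod p))
  have hbound := pow_le_of_isIntrospective hrp hM hind hMp hpℓ.le hD8 hDt
  rw [hNM] at hbound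
  exact hbig.not_ge (hbound.trans ((Nat.pow_le_pow_left hN2 _).trans_eq (pow_mul _ _ _).symm))

/-- The Agrawal–Kayal–Saxena characterization of primality. -/
theorem aks_primality (N : ℕ) (hN : 2 ≤ N) :
    N.Prime ↔
      ((¬ ∃ a b : ℕ, 2 ≤ a ∧ 2 ≤ b ∧ N = a ^ b) ∧
       (¬ ∃ p : ℕ, p.Prime ∧ p ∣ N ∧ p < N ∧ p ≤ (Nat.clog 2 N) ^ 4) ∧
       (∀ r a : ℕ, 1 ≤ r → r < (Nat.clog 2 N) ^ 4 → 1 ≤ a → a < (Nat.clog 2 N) ^ 4 →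
         (X ^ r - 1 : (ZMod N)[X]) ∣
           ((X + C (a : ZMod N)) ^ N - (X ^ N + C (a : ZMod N))))) := by
  refine ⟨fun hp ↦ ⟨?_, ?_, ?_⟩, fun ⟨h₁, h₂, h₃⟩ ↦ prime_of_aks_conditions hN h₁ h₂ h₃⟩
  · rintro ⟨a, b, -, hb, rfl⟩
    have := ((Nat.Prime.pow_eq_iff hp).mp rfl).2
    omega
  · rintro ⟨q, hq, hqN, hqN', -⟩
    exact hqN'.ne ((Nat.prime_dvd_prime_iff_eq hq hp).mp hqN)
  · have : Fact N.Prime := ⟨hp⟩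
    exact fun r a _ _ _ ha ↦ isIntrospective_char N r _ a ha
end

section
/- There exists a constant C > 0 such that for every finite metric space (X, d) with |X| = n ≥ 2, there is an embedding f of X into a real Hilbert space (e.g. ℓ² of ℝ) with distortion at most C·log n; that is, for all x, y ∈ X: d(x,y) ≤ ‖f(x) − f(y)‖ ≤ C·(log n)·d(x,y). -/
/-!
Take the Fréchet-type coordinates `x ↦ d(x, S)` for random subsets `S`, sampled at the densities
`2⁻ᵏ⁻¹`, `k < m = ⌈log₂ n⌉`, each weighted by the square root of its probability, so that the
squared ℓ² distance of two images is `∑ₖ 𝔼ₖ (d(x, S) - d(y, S))²`. Every coordinate is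
1-Lipschitz, which bounds this by `m d(x, y)²`. For the lower bound let `rⱼ` be the least radius
at which the closed balls about `x` and `y` both have `2ʲ` points, capped at `d(x, y) / 2`. If
`r_k < r_{k+1}`, one of the open `r_{k+1}`-balls has fewer than `2ᵏ⁺¹` points, while the other
point's closed `r_k`-ball has at least `2ᵏ`; a set of density `2⁻ᵏ⁻¹` meets the latter and misses
the former with probability at least `1/12`, and then `|d(x, S) - d(y, S)| ≥ r_{k+1} - r_k`.
Telescoping, `∑ₖ 𝔼ₖ |d(x, S) - d(y, S)| ≥ (r_m - r_0) / 12 = d(x, y) / 24`, and Cauchy–Schwarz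
turns this into the lower bound `d(x, y)² / (576 m)`. Rescaling gives distortion `24 m`.
-/

open Finset Metric

namespace BourgainEmbedding

section RandomSubset

variable {α : Type*} [Fintype α]

/-- The probability of `S` for the random subset of `α` containing each point independently with
probability `p`. -/
noncomputable def subsetWeight (p : ℝ) (S : Finset α) : ℝ :=
  p ^ #S * (1 - p) ^ (Fintype.card α - #S)

lemma subsetWeight_nonneg {p : ℝ} (hp₀ : 0 ≤ p) (hp₁ : p ≤ 1) (S : Finset α) :
    0 ≤ subsetWeight p S := by
  have := sub_nonneg.2 hp₁
  unfold subsetWeight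
  positivity

lemma subsetWeight_half_pow_nonneg (k : ℕ) (S : Finset α) :
    0 ≤ subsetWeight ((1 / 2) ^ (k + 1)) S :=
  subsetWeight_nonneg (by positivity) (pow_le_one₀ (by norm_num) (by norm_num)) S

lemma sum_subsetWeight_disjoint [DecidableEq α] (p : ℝ) (C : Finset α) :
    ∑ S with Disjoint S C, subsetWeight p S = (1 - p) ^ #C := by
  have hfilter : ({S | Disjoint S C} : Finset (Finset α)) = Cᶜ.powerset := by
    ext S
    simp [subset_compl_iff_disjoint_right]
  have hweight : ∀ S ∈ Cᶜ.powerset,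
      subsetWeight p S = (1 - p) ^ #C * (p ^ #S * (1 - p) ^ (#Cᶜ - #S)) := by
    intro S hS
    have hSC := card_le_card (mem_powerset.1 hS)
    have hC := card_le_univ C
    rw [card_compl] at hSC ⊢
    rw [subsetWeight, show Fintype.card α - #S = #C + (Fintype.card α - #C - #S) by omega,
      pow_add]
    ring
  rw [hfilter, sum_congr rfl hweight, ← mul_sum, sum_pow_mul_eq_add_pow, add_sub_cancel,
    one_pow, mul_one]

lemma sum_subsetWeight (p : ℝ) : ∑ S : Finset α, subsetWeight p S = 1 := by
  classical
  simpa using sum_subsetWeight_disjoint p (∅ : Finset α)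

lemma sum_subsetWeight_not_disjoint_disjoint [DecidableEq α] (p : ℝ) {A B : Finset α}
    (hAB : Disjoint A B) :
    ∑ S with ¬Disjoint S A ∧ Disjoint S B, subsetWeight p S
      = (1 - p) ^ #B - (1 - p) ^ (#A + #B) := by
  have hsplit := sum_filter_add_sum_filter_not ({S | Disjoint S B} : Finset (Finset α))
    (fun S => Disjoint S A) (subsetWeight p)
  simp only [filter_filter, and_comm (a := Disjoint _ B), ← disjoint_union_right] at hsplit
  rw [sum_subsetWeight_disjoint, sum_subsetWeight_disjoint, card_union_of_disjoint hAB] at hsplit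
  linarith

end RandomSubset

section Estimates

lemma quarter_le_one_sub_half_pow (k : ℕ) :
    1 / 4 ≤ (1 - (1 / 2 : ℝ) ^ (k + 1)) ^ 2 ^ (k + 1) := by
  induction k with
  | zero => norm_num
  | succ k ih =>
    have hsq : 1 - (1 / 2 : ℝ) ^ (k + 1) ≤ (1 - (1 / 2) ^ (k + 2)) ^ 2 := by
      nlinarith [sq_nonneg ((1 / 2 : ℝ) ^ (k + 2)), pow_succ (1 / 2 : ℝ) (k + 1)]
    calc (1 / 4 : ℝ) ≤ (1 - (1 / 2) ^ (k + 1)) ^ 2 ^ (k + 1) := ih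
      _ ≤ ((1 - (1 / 2) ^ (k + 2)) ^ 2) ^ 2 ^ (k + 1) := by
        gcongr
        linarith [pow_le_one₀ (n := k + 1) (by norm_num : (0 : ℝ) ≤ 1 / 2) (by norm_num)]
      _ = (1 - (1 / 2) ^ (k + 2)) ^ 2 ^ (k + 2) := by rw [← pow_mul, ← pow_succ']

lemma one_sub_half_pow_le_two_thirds (k : ℕ) :
    (1 - (1 / 2 : ℝ) ^ (k + 1)) ^ 2 ^ k ≤ 2 / 3 := by
  have hexp : (3 / 2 : ℝ) ≤ Real.exp (1 / 2) := by linarith [Real.add_one_le_exp (1 / 2)]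
  calc (1 - (1 / 2 : ℝ) ^ (k + 1)) ^ 2 ^ k ≤ Real.exp (-(1 / 2) ^ (k + 1)) ^ 2 ^ k := by
        gcongr
        · linarith [pow_le_one₀ (n := k + 1) (by norm_num : (0 : ℝ) ≤ 1 / 2) (by norm_num)]
        · exact Real.one_sub_le_exp_neg _
    _ = (Real.exp (1 / 2))⁻¹ := by
        rw [← Real.exp_nat_mul, ← Real.exp_neg]
        congr 1
        push_cast
        rw [pow_succ, mul_neg, ← mul_assoc, ← mul_pow]
        norm_num
    _ ≤ 2 / 3 := by
        rw [inv_le_comm₀ (Real.exp_pos _) (by norm_num)]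
        linarith

lemma twelfth_le_one_sub_half_pow_sub {k a b : ℕ} (ha : 2 ^ k ≤ a) (hb : b ≤ 2 ^ (k + 1)) :
    1 / 12 ≤ (1 - (1 / 2 : ℝ) ^ (k + 1)) ^ b - (1 - (1 / 2) ^ (k + 1)) ^ (a + b) := by
  have hp₀ : 0 ≤ (1 / 2 : ℝ) ^ (k + 1) := by positivity
  have hp₁ : (1 / 2 : ℝ) ^ (k + 1) ≤ 1 := pow_le_one₀ (by norm_num) (by norm_num)
  set q : ℝ := 1 - (1 / 2) ^ (k + 1)
  have hq₀ : 0 ≤ q := by linarith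
  have hq₁ : q ≤ 1 := by linarith
  have hb' : 1 / 4 ≤ q ^ b :=
    (quarter_le_one_sub_half_pow k).trans (pow_le_pow_of_le_one hq₀ hq₁ hb)
  have ha' : q ^ a ≤ 2 / 3 :=
    (pow_le_pow_of_le_one hq₀ hq₁ ha).trans (one_sub_half_pow_le_two_thirds k)
  rw [pow_add]
  nlinarith

end Estimates

section HitAndMiss

lemma sub_le_abs_infDist_sub {X : Type*} [PseudoMetricSpace X] {u v : X} {s : Set X} {r R : ℝ}
    (hu : ∃ a ∈ s, dist u a ≤ r) (hv : ∀ z ∈ s, R ≤ dist v z) :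
    R - r ≤ |infDist u s - infDist v s| := by
  obtain ⟨a, ha, hua⟩ := hu
  have hvs : R ≤ infDist v s := (le_infDist ⟨a, ha⟩).2 hv
  have hus : infDist u s ≤ r := (infDist_le_dist_of_mem ha).trans hua
  rw [abs_sub_comm]
  exact (by linarith : R - r ≤ infDist v s - infDist u s).trans (le_abs_self _)

lemma sq_infDist_sub_le {X : Type*} [PseudoMetricSpace X] (x y : X) (s : Set X) :
    (infDist x s - infDist y s) ^ 2 ≤ dist x y ^ 2 := by
  have h := (lipschitz_infDist_pt s).dist_le_mul x y
  rw [NNReal.coe_one, one_mul, Real.dist_eq] at h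
  simpa only [sq_abs] using pow_le_pow_left₀ (abs_nonneg _) h 2

variable {X : Type*} [MetricSpace X] [Fintype X]

lemma sub_div_twelve_le_sum_subsetWeight_mul_abs_of_card_le {u v : X} {k : ℕ} {r R : ℝ}
    (hu : 2 ^ k ≤ #{z | dist u z ≤ r}) (hv : #{z | dist v z < R} ≤ 2 ^ (k + 1))
    (hrR : r ≤ R) (huv : r + R ≤ dist u v) :
    (R - r) / 12 ≤ ∑ S : Finset X,
      subsetWeight ((1 / 2) ^ (k + 1)) S * |infDist u (S : Set X) - infDist v (S : Set X)| := by
  classical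
  set A : Finset X := {z | dist u z ≤ r}
  set B : Finset X := {z | dist v z < R}
  have hAB : Disjoint A B := by
    refine disjoint_left.2 fun z hzA hzB => ?_
    simp only [A, B, mem_filter, mem_univ, true_and] at hzA hzB
    linarith [dist_triangle_right u v z]
  have hsep : ∀ S ∈ ({S | ¬Disjoint S A ∧ Disjoint S B} : Finset (Finset X)),
      R - r ≤ |infDist u (S : Set X) - infDist v (S : Set X)| := by
    intro S hS
    obtain ⟨hSA, hSB⟩ := (mem_filter.1 hS).2
    obtain ⟨a, haS, haA⟩ := not_disjoint_iff.1 hSA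
    refine sub_le_abs_infDist_sub ⟨a, haS, by simpa [A] using haA⟩ fun z hz => ?_
    by_contra! hzv
    exact disjoint_left.1 hSB hz (by simpa [B] using hzv)
  calc (R - r) / 12
      ≤ (R - r) * ∑ S with ¬Disjoint S A ∧ Disjoint S B,
          subsetWeight ((1 / 2) ^ (k + 1)) S := by
        rw [sum_subsetWeight_not_disjoint_disjoint _ hAB]
        nlinarith [twelfth_le_one_sub_half_pow_sub hu hv]
    _ ≤ ∑ S with ¬Disjoint S A ∧ Disjoint S B,
          subsetWeight ((1 / 2) ^ (k + 1)) S *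
            |infDist u (S : Set X) - infDist v (S : Set X)| := by
        rw [mul_sum]
        refine sum_le_sum fun S hS => ?_
        rw [mul_comm]
        exact mul_le_mul_of_nonneg_left (hsep S hS) (subsetWeight_half_pow_nonneg k S)
    _ ≤ _ := sum_le_sum_of_subset_of_nonneg (filter_subset _ _) fun S _ _ =>
        mul_nonneg (subsetWeight_half_pow_nonneg k S) (abs_nonneg _)

end HitAndMiss

section Radii

variable {X : Type*} [MetricSpace X] [Fintype X] (x y : X)

noncomputable def candidateRadii : Finset ℝ := univ.image (dist x) ∪ univ.image (dist y)

noncomputable def goodRadii (j : ℕ) : Finset ℝ :=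
  {r ∈ candidateRadii x y | 2 ^ j ≤ #{z | dist x z ≤ r} ∧ 2 ^ j ≤ #{z | dist y z ≤ r}}

/-- The radius `rⱼ` of the proof. Ball sizes only jump at distances from `x` or `y`, so the
minimum may be taken over `candidateRadii`. -/
noncomputable def scaleRadius (j : ℕ) : ℝ :=
  (insert (dist x y / 2) (goodRadii x y j)).min' (insert_nonempty _ _)

variable {x y}

lemma nonneg_of_mem_candidateRadii {r : ℝ} (hr : r ∈ candidateRadii x y) : 0 ≤ r := by
  simp only [candidateRadii, mem_union, mem_image, mem_univ, true_and] at hr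
  rcases hr with ⟨z, rfl⟩ | ⟨z, rfl⟩ <;> exact dist_nonneg

lemma scaleRadius_le_half (j : ℕ) : scaleRadius x y j ≤ dist x y / 2 :=
  min'_le _ _ (mem_insert_self _ _)

lemma scaleRadius_le_of_mem {j : ℕ} {r : ℝ} (hr : r ∈ goodRadii x y j) :
    scaleRadius x y j ≤ r :=
  min'_le _ _ (mem_insert_of_mem hr)

lemma scaleRadius_nonneg (j : ℕ) : 0 ≤ scaleRadius x y j := by
  refine le_min' _ _ _ fun r hr => ?_
  rcases mem_insert.1 hr with rfl | hr
  · positivity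
  · exact nonneg_of_mem_candidateRadii (mem_filter.1 hr).1

lemma scaleRadius_mem_goodRadii {j : ℕ} (hj : scaleRadius x y j < dist x y / 2) :
    scaleRadius x y j ∈ goodRadii x y j :=
  (mem_insert.1 (min'_mem _ _)).resolve_left hj.ne

lemma scaleRadius_zero : scaleRadius x y 0 = 0 := by
  refine le_antisymm (scaleRadius_le_of_mem ?_) (scaleRadius_nonneg 0)
  simp only [goodRadii, candidateRadii, mem_filter, mem_union, mem_image, mem_univ, true_and,
    pow_zero, one_le_card]
  exact ⟨Or.inl ⟨x, dist_self x⟩, ⟨x, by simp⟩, ⟨y, by simp⟩⟩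

/-- Below `d(x, y) / 2` the two balls are disjoint, so they cannot both hold `2ᵐ ≥ |X|` points. -/
lemma scaleRadius_of_card_le_two_pow {m : ℕ} (hm : Fintype.card X ≤ 2 ^ m) :
    scaleRadius x y m = dist x y / 2 := by
  refine le_antisymm (scaleRadius_le_half m) (le_min' _ _ _ fun r hr => ?_)
  rcases mem_insert.1 hr with rfl | hr
  · exact le_rfl
  obtain ⟨-, hx, hy⟩ := mem_filter.1 hr
  by_contra! hr
  classical
  have hdisj :
      Disjoint ({z | dist x z ≤ r} : Finset X) ({z | dist y z ≤ r} : Finset X) := by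
    refine disjoint_left.2 fun z hzx hzy => ?_
    simp only [mem_filter, mem_univ, true_and] at hzx hzy
    linarith [dist_triangle_right x y z]
  have := (card_union_of_disjoint hdisj).symm.trans_le (card_le_univ _)
  have := Nat.one_le_two_pow (n := m)
  omega

lemma card_ball_lt_or_card_ball_lt {k : ℕ} (hk : scaleRadius x y k < scaleRadius x y (k + 1)) :
    #{z | dist x z < scaleRadius x y (k + 1)} < 2 ^ (k + 1) ∨
      #{z | dist y z < scaleRadius x y (k + 1)} < 2 ^ (k + 1) := by
  set R := scaleRadius x y (k + 1)
  by_contra! hballs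
  set below : Finset ℝ := {r ∈ candidateRadii x y | r < R}
  have hbelow : below.Nonempty :=
    ⟨0, mem_filter.2 ⟨mem_union_left _ (mem_image.2 ⟨x, mem_univ _, dist_self x⟩),
      (scaleRadius_nonneg k).trans_lt hk⟩⟩
  have hmax := mem_filter.1 (below.max'_mem hbelow)
  have hball : ∀ w : X, (∀ z, dist w z ∈ candidateRadii x y) →
      #{z | dist w z < R} ≤ #{z | dist w z ≤ below.max' hbelow} := fun w hw =>
    card_le_card fun z hz => by
      simp only [mem_filter, mem_univ, true_and] at hz ⊢
      exact le_max' _ _ (mem_filter.2 ⟨hw z, hz⟩)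
  have hx := hball x fun z => mem_union_left _ (mem_image_of_mem _ (mem_univ z))
  have hy := hball y fun z => mem_union_right _ (mem_image_of_mem _ (mem_univ z))
  have : R ≤ below.max' hbelow :=
    scaleRadius_le_of_mem (mem_filter.2 ⟨hmax.1, hballs.1.trans hx, hballs.2.trans hy⟩)
  exact this.not_gt hmax.2

end Radii

section Moments

variable {X : Type*} [MetricSpace X] [Fintype X] (x y : X)

lemma scaleRadius_succ_sub_div_twelve_le (k : ℕ) :
    (scaleRadius x y (k + 1) - scaleRadius x y k) / 12 ≤ ∑ S : Finset X,
      subsetWeight ((1 / 2) ^ (k + 1)) S * |infDist x (S : Set X) - infDist y (S : Set X)| := by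
  rcases le_or_gt (scaleRadius x y (k + 1)) (scaleRadius x y k) with hle | hlt
  · exact le_trans (by linarith) (sum_nonneg fun S _ =>
      mul_nonneg (subsetWeight_half_pow_nonneg k S) (abs_nonneg _))
  have hhalf : scaleRadius x y k < dist x y / 2 := hlt.trans_le (scaleRadius_le_half _)
  obtain ⟨-, hx, hy⟩ := mem_filter.1 (scaleRadius_mem_goodRadii hhalf)
  have hsum : scaleRadius x y k + scaleRadius x y (k + 1) ≤ dist x y := by
    linarith [scaleRadius_le_half (x := x) (y := y) (k + 1)]
  rcases card_ball_lt_or_card_ball_lt hlt with hball | hball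
  · simpa only [abs_sub_comm] using
      sub_div_twelve_le_sum_subsetWeight_mul_abs_of_card_le hy hball.le hlt.le
        (by rwa [dist_comm])
  · exact sub_div_twelve_le_sum_subsetWeight_mul_abs_of_card_le hx hball.le hlt.le hsum

lemma dist_div_twentyFour_le_sum_sum_subsetWeight_mul_abs {m : ℕ}
    (hm : Fintype.card X ≤ 2 ^ m) :
    dist x y / 24 ≤ ∑ k ∈ range m, ∑ S : Finset X,
      subsetWeight ((1 / 2) ^ (k + 1)) S * |infDist x (S : Set X) - infDist y (S : Set X)| := by
  calc dist x y / 24 = (scaleRadius x y m - scaleRadius x y 0) / 12 := by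
        rw [scaleRadius_of_card_le_two_pow hm, scaleRadius_zero]; ring
    _ = ∑ k ∈ range m, (scaleRadius x y (k + 1) - scaleRadius x y k) / 12 := by
        rw [← sum_div, sum_range_sub]
    _ ≤ _ := sum_le_sum fun k _ => scaleRadius_succ_sub_div_twelve_le x y k

lemma sq_dist_le_mul_sum_sum_subsetWeight_mul_sq {m : ℕ} (hm : Fintype.card X ≤ 2 ^ m) :
    dist x y ^ 2 ≤ 576 * m * ∑ k ∈ range m, ∑ S : Finset X, subsetWeight ((1 / 2) ^ (k + 1)) S *
      (infDist x (S : Set X) - infDist y (S : Set X)) ^ 2 := by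
  set gap : Finset X → ℝ := fun S => infDist x (S : Set X) - infDist y (S : Set X)
  have hjensen : ∀ k : ℕ, (∑ S : Finset X, subsetWeight ((1 / 2) ^ (k + 1)) S * |gap S|) ^ 2
      ≤ ∑ S : Finset X, subsetWeight ((1 / 2) ^ (k + 1)) S * gap S ^ 2 := by
    intro k
    have hw := subsetWeight_half_pow_nonneg (α := X) k
    simpa only [sum_subsetWeight, one_mul] using sum_sq_le_sum_mul_sum_of_sq_le_mul univ
      (fun S _ => hw S) (fun S _ => mul_nonneg (hw S) (sq_nonneg (gap S)))
      (fun S _ => le_of_eq (by rw [mul_pow, sq_abs]; ring))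
  calc dist x y ^ 2 = 576 * (dist x y / 24) ^ 2 := by ring
    _ ≤ 576 * (∑ k ∈ range m, ∑ S : Finset X,
          subsetWeight ((1 / 2) ^ (k + 1)) S * |gap S|) ^ 2 := by
        gcongr
        exact dist_div_twentyFour_le_sum_sum_subsetWeight_mul_abs x y hm
    _ ≤ 576 * (m * ∑ k ∈ range m, (∑ S : Finset X,
          subsetWeight ((1 / 2) ^ (k + 1)) S * |gap S|) ^ 2) := by
        gcongr
        exact sq_sum_le_card_mul_sum_sq.trans_eq (by rw [card_range])
    _ ≤ _ := by
        rw [mul_assoc]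
        gcongr with k
        exact hjensen k

lemma sum_sum_subsetWeight_mul_sq_le (m : ℕ) :
    ∑ k ∈ range m, ∑ S : Finset X,
      subsetWeight ((1 / 2) ^ (k + 1)) S * (infDist x (S : Set X) - infDist y (S : Set X)) ^ 2
      ≤ m * dist x y ^ 2 := by
  calc _ ≤ ∑ k ∈ range m, ∑ S : Finset X, subsetWeight ((1 / 2) ^ (k + 1)) S * dist x y ^ 2 :=
        sum_le_sum fun k _ => sum_le_sum fun S _ =>
          mul_le_mul_of_nonneg_left (sq_infDist_sub_le x y S) (subsetWeight_half_pow_nonneg k S)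
    _ = m * dist x y ^ 2 := by
        simp only [← sum_mul, sum_subsetWeight, one_mul, sum_const, card_range, nsmul_eq_mul]

end Moments

section Embedding

lemma exists_lp_norm_sub_sq_eq {X ι : Type*} [Fintype ι] (g : X → ι → ℝ) :
    ∃ F : X → lp (fun _ : ℕ => ℝ) 2, ∀ x y, ‖F x - F y‖ ^ 2 = ∑ i, (g x i - g y i) ^ 2 := by
  obtain ⟨e, he⟩ := Countable.exists_injective_nat ι
  have hv : Orthonormal ℝ ((default : HilbertBasis ℕ ℝ (lp (fun _ : ℕ => ℝ) 2)) ∘ e) :=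
    (HilbertBasis.orthonormal _).comp e he
  refine ⟨fun x => ∑ i, g x i • (default : HilbertBasis ℕ ℝ _) (e i), fun x y => ?_⟩
  rw [← sum_sub_distrib]
  simp_rw [← sub_smul]
  rw [← real_inner_self_eq_norm_sq]
  simpa [sq] using hv.inner_sum (fun i => g x i - g y i) (fun i => g x i - g y i) univ

variable {X : Type*} [MetricSpace X] [Fintype X]

/-- Weighted by `√ℙ(S)`, so that squared distances become expectations over the random sets. -/
noncomputable def frechetCoord (m : ℕ) (x : X) (i : Fin m × Finset X) : ℝ :=
  √(subsetWeight ((1 / 2) ^ ((i.1 : ℕ) + 1)) i.2) * infDist x (i.2 : Set X)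

lemma sum_sq_frechetCoord_sub (m : ℕ) (x y : X) :
    ∑ i, (frechetCoord m x i - frechetCoord m y i) ^ 2 = ∑ k ∈ range m, ∑ S : Finset X,
      subsetWeight ((1 / 2) ^ (k + 1)) S *
        (infDist x (S : Set X) - infDist y (S : Set X)) ^ 2 := by
  rw [Fintype.sum_prod_type, ← Fin.sum_univ_eq_sum_range]
  refine sum_congr rfl fun k _ => sum_congr rfl fun S _ => ?_
  rw [frechetCoord, frechetCoord, ← mul_sub, mul_pow,
    Real.sq_sqrt (subsetWeight_half_pow_nonneg k S)]

lemma exists_lp_embedding_of_card_le_two_pow {m : ℕ} (hm : Fintype.card X ≤ 2 ^ m) :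
    ∃ f : X → lp (fun _ : ℕ => ℝ) 2, ∀ x y : X,
      dist x y ≤ ‖f x - f y‖ ∧ ‖f x - f y‖ ≤ 24 * m * dist x y := by
  obtain ⟨F, hF⟩ := exists_lp_norm_sub_sq_eq (frechetCoord (X := X) m)
  refine ⟨fun x => (24 * √m) • F x, fun x y => ?_⟩
  have hnorm : ‖(24 * √m) • F x - (24 * √m) • F y‖ ^ 2 = 576 * m * ∑ k ∈ range m,
      ∑ S : Finset X, subsetWeight ((1 / 2) ^ (k + 1)) S *
        (infDist x (S : Set X) - infDist y (S : Set X)) ^ 2 := by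
    rw [← smul_sub, norm_smul, mul_pow, hF, sum_sq_frechetCoord_sub, Real.norm_eq_abs, sq_abs,
      mul_pow, Real.sq_sqrt (Nat.cast_nonneg m)]
    ring
  constructor
  · refine (pow_le_pow_iff_left₀ dist_nonneg (norm_nonneg _) two_ne_zero).1 ?_
    exact hnorm ▸ sq_dist_le_mul_sum_sum_subsetWeight_mul_sq x y hm
  · refine (pow_le_pow_iff_left₀ (norm_nonneg _) (by positivity) two_ne_zero).1 ?_
    rw [hnorm]
    nlinarith [sum_sum_subsetWeight_mul_sq_le x y m, Nat.cast_nonneg (α := ℝ) m]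

end Embedding

lemma clog_two_le_four_mul_log {n : ℕ} (hn : 2 ≤ n) :
    (Nat.clog 2 n : ℝ) ≤ 4 * Real.log n := by
  have hlog2 : 1 / 2 < Real.log 2 := by linarith [Real.log_two_gt_d9]
  have hpow : (2 : ℝ) ^ (Nat.clog 2 n - 1) ≤ n := by
    exact_mod_cast (Nat.pow_pred_clog_lt_self one_lt_two hn).le
  have hpred : ((Nat.clog 2 n - 1 : ℕ) : ℝ) * Real.log 2 ≤ Real.log n := by
    rw [← Real.log_pow]
    exact Real.log_le_log (by positivity) hpow
  have hlogn : Real.log 2 ≤ Real.log n := Real.log_le_log two_pos (by exact_mod_cast hn)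
  rw [Nat.cast_sub (Nat.clog_pos one_lt_two hn), Nat.cast_one] at hpred
  nlinarith

end BourgainEmbedding

/-- Bourgain's embedding theorem: every `n`-point metric space embeds into the real
Hilbert space `ℓ²` with distortion `O(log n)`. -/
theorem bourgain_embedding :
    ∃ C : ℝ, 0 < C ∧
      ∀ (X : Type) [MetricSpace X] [Fintype X], 2 ≤ Fintype.card X →
        ∃ f : X → lp (fun _ : ℕ => ℝ) 2,
          ∀ x y : X,
            dist x y ≤ ‖f x - f y‖ ∧
            ‖f x - f y‖ ≤ C * Real.log (Fintype.card X) * dist x y := by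
  refine ⟨96, by norm_num, fun X _ _ hcard => ?_⟩
  obtain ⟨f, hf⟩ := BourgainEmbedding.exists_lp_embedding_of_card_le_two_pow (X := X)
    (Nat.le_pow_clog one_lt_two (Fintype.card X))
  refine ⟨f, fun x y => ⟨(hf x y).1, (hf x y).2.trans ?_⟩⟩
  have := BourgainEmbedding.clog_two_le_four_mul_log hcard
  exact mul_le_mul_of_nonneg_right (by linarith) dist_nonneg
end

section
/- There exists a constant c > 0 such that for every n ≥ 2 and every function f : {−1,1}ⁿ → {−1,1} with E[f(x)] = 0 under the uniform distribution, there exists a coordinate i ∈ {1,…,n} whose influence satisfies I_i(f) ≥ c · (log n) / n. -/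
/-!
Pass from `f` to the `±1`-valued function `F` and its Walsh expansion `F = ∑ a(s) χ_s`: then
`∑ a(s)² = 1`, balance means `a(∅) = 0`, and the influence of `i` is `∑_{s ∋ i} a(s)²`, the
squared norm of the derivative `∂ᵢF`, which takes values in `{-1, 0, 1}`.

Bonami's inequality `‖T_ρ g‖₄ ≤ ‖g‖₂` (for `ρ² ≤ 1/3`), paired by Hölder with such a
`{-1, 0, 1}`-valued function, gives `Stab_{1/4}(∂ᵢF)² ≤ Inf_i³`. So if every influence is at
most `τ`, then `∑ᵢ Stab_{1/4}(∂ᵢF) ≤ √τ · I`, where `I = ∑ |s| a(s)²` is the total influence.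
On the other hand `∑ᵢ Stab_{1/4}(∂ᵢF) ≥ ∑ |s| 4^{-|s|} a(s)²`, and by Markov at least half of
the Fourier weight lies on levels `1 ≤ |s| ≤ 2I`, so this sum is at least `e^{-4I} / 2`.
For `τ = log n / (16 n)` we get `I < log n / 16`, and the two bounds are incompatible.
-/

open Finset Function Real

namespace BooleanFourier

variable {n : ℕ}

def weight (s : Fin n → Bool) : ℕ := ∑ i, (s i).toNat

/-- `s` is the indicator of a set `S` of coordinates and `x i = true` encodes the value `-1`,
so `walsh s x = ∏_{i ∈ S} xᵢ`. -/
noncomputable def walsh (s x : Fin n → Bool) : ℝ := ∏ i, if s i && x i then -1 else 1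

noncomputable def walshCoeff (g : (Fin n → Bool) → ℝ) (s : Fin n → Bool) : ℝ :=
  (∑ x, g x * walsh s x) / 2 ^ n

noncomputable def walshSum (w : (Fin n → Bool) → ℝ) (x : Fin n → Bool) : ℝ :=
  ∑ s, w s * walsh s x

lemma walsh_comm (s x : Fin n → Bool) : walsh s x = walsh x s := by
  simp only [walsh, Bool.and_comm]

lemma sum_walsh_mul_walsh (s t : Fin n → Bool) :
    ∑ x, walsh s x * walsh t x = if s = t then 2 ^ n else 0 := by
  have hcoord : ∀ i, ∑ b : Bool, (if s i && b then (-1 : ℝ) else 1) * (if t i && b then -1 else 1)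
      = if s i = t i then 2 else 0 := by
    intro i; cases s i <;> cases t i <;> norm_num
  simp_rw [walsh, ← prod_mul_distrib, ← Fintype.prod_sum (fun i b =>
    (if s i && b then (-1 : ℝ) else 1) * (if t i && b then -1 else 1)), hcoord, prod_ite_zero]
  simp [funext_iff]

lemma walshCoeff_walshSum (w : (Fin n → Bool) → ℝ) : walshCoeff (walshSum w) = w := by
  ext t
  simp_rw [walshCoeff, walshSum, sum_mul, mul_assoc]
  rw [sum_comm]
  simp_rw [← mul_sum, sum_walsh_mul_walsh]
  simp

lemma walshSum_walshCoeff (g : (Fin n → Bool) → ℝ) : walshSum (walshCoeff g) = g := by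
  ext x
  have h : ∑ s, (∑ y, g y * walsh s y) * walsh s x = ∑ y, g y * ∑ s, walsh y s * walsh x s := by
    simp_rw [sum_mul, mul_sum]
    rw [sum_comm]
    exact sum_congr rfl fun y _ => sum_congr rfl fun s _ => by
      rw [walsh_comm s y, walsh_comm s x]; ring
  simp_rw [walshSum, walshCoeff, div_mul_eq_mul_div, ← sum_div, h, sum_walsh_mul_walsh]
  simp

lemma sum_walshSum_mul (w g : (Fin n → Bool) → ℝ) :
    ∑ x, walshSum w x * g x = 2 ^ n * ∑ s, w s * walshCoeff g s := by
  simp_rw [walshSum, walshCoeff, sum_mul, mul_div_assoc', mul_sum]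
  rw [sum_comm]
  refine sum_congr rfl fun s _ => ?_
  rw [mul_div_cancel₀ _ (by positivity)]
  exact sum_congr rfl fun x _ => by ring

lemma sum_mul_eq_sum_walshCoeff_mul (u v : (Fin n → Bool) → ℝ) :
    ∑ x, u x * v x = 2 ^ n * ∑ s, walshCoeff u s * walshCoeff v s := by
  conv_lhs => rw [← walshSum_walshCoeff u]
  exact sum_walshSum_mul _ _

lemma sum_cube_succ {M : Type*} [AddCommMonoid M] (G : (Fin (n + 1) → Bool) → M) :
    ∑ x, G x = ∑ y : Fin n → Bool, (G (Fin.cons false y) + G (Fin.cons true y)) := by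
  rw [← (Fin.consEquiv fun _ => Bool).sum_comp, Fintype.sum_prod_type_right]
  exact sum_congr rfl fun y _ => by rw [Fintype.sum_bool, add_comm]; rfl

lemma walsh_cons (c b : Bool) (s x : Fin n → Bool) :
    walsh (Fin.cons c s : Fin (n + 1) → Bool) (Fin.cons b x) =
      (if c && b then -1 else 1) * walsh s x := by
  simp [walsh, Fin.prod_univ_succ]

lemma weight_cons (c : Bool) (s : Fin n → Bool) :
    weight (Fin.cons c s : Fin (n + 1) → Bool) = c.toNat + weight s := by
  simp [weight, Fin.sum_univ_succ]

lemma weight_update_false_le (s : Fin n → Bool) (i : Fin n) :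
    weight (update s i false) ≤ weight s :=
  sum_le_sum fun j _ => by rcases eq_or_ne j i with rfl | h <;> simp [*]

lemma eq_false_of_weight_eq_zero {s : Fin n → Bool} (h : weight s = 0) : s = fun _ => false := by
  ext i
  simpa using (sum_eq_zero_iff.1 h) i (mem_univ i)

lemma sum_sum_ite_eq_sum_weight_mul (h : (Fin n → Bool) → ℝ) :
    ∑ i, ∑ s, (if s i then h s else 0) = ∑ s, weight s * h s := by
  rw [sum_comm]
  refine sum_congr rfl fun s _ => ?_
  simp only [weight, Nat.cast_sum, sum_mul]
  exact sum_congr rfl fun i _ => by cases s i <;> simp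

lemma walshSum_cons (w : (Fin (n + 1) → Bool) → ℝ) (b : Bool) (y : Fin n → Bool) :
    walshSum w (Fin.cons b y) = walshSum (fun s => w (Fin.cons false s)) y +
      (if b then -1 else 1) * walshSum (fun s => w (Fin.cons true s)) y := by
  simp only [walshSum, sum_cube_succ fun s => w s * walsh s (Fin.cons b y), walsh_cons,
    sum_add_distrib, mul_sum]
  congr 1
  · simp
  · refine sum_congr rfl fun s _ => ?_
    cases b <;> simp

lemma sum_pow_four_add_sub_le {ι : Type*} [Fintype ι] {U V : ι → ℝ} {A a b ρ : ℝ}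
    (hA : 0 ≤ A) (ha : 0 ≤ a) (hb : 0 ≤ b) (hρ : ρ ^ 2 ≤ 1 / 3)
    (hU : ∑ y, U y ^ 4 ≤ A * a ^ 2) (hV : ∑ y, V y ^ 4 ≤ A * b ^ 2) :
    ∑ y, ((U y + ρ * V y) ^ 4 + (U y - ρ * V y) ^ 4) ≤ 2 * A * (a + b) ^ 2 := by
  have hUV : ∑ y, U y ^ 2 * V y ^ 2 ≤ A * a * b := by
    have hcs := sum_mul_sq_le_sq_mul_sq univ (fun y => U y ^ 2) (fun y => V y ^ 2)
    simp_rw [← pow_mul] at hcs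
    refine (pow_le_pow_iff_left₀ (sum_nonneg fun y _ => by positivity) (by positivity)
      two_ne_zero).1 (hcs.trans ?_)
    calc (∑ y, U y ^ 4) * ∑ y, V y ^ 4 ≤ (A * a ^ 2) * (A * b ^ 2) :=
          mul_le_mul hU hV (sum_nonneg fun y _ => by positivity) (by positivity)
      _ = (A * a * b) ^ 2 := by ring
  have hexpand : ∀ y, (U y + ρ * V y) ^ 4 + (U y - ρ * V y) ^ 4 =
      2 * U y ^ 4 + 12 * ρ ^ 2 * (U y ^ 2 * V y ^ 2) + 2 * ρ ^ 4 * V y ^ 4 := fun y => by ring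
  simp only [hexpand, sum_add_distrib, ← mul_sum]
  have hρ4 : ρ ^ 4 ≤ 1 := by nlinarith
  have h2 : 0 ≤ ∑ y, U y ^ 2 * V y ^ 2 := sum_nonneg fun y _ => by positivity
  have h4 : 0 ≤ ∑ y, V y ^ 4 := sum_nonneg fun y _ => by positivity
  nlinarith [mul_le_mul_of_nonneg_right hρ4 h4, mul_le_mul_of_nonneg_right hρ h2]

theorem bonami {ρ : ℝ} (hρ : ρ ^ 2 ≤ 1 / 3) (w : (Fin n → Bool) → ℝ) :
    ∑ x, walshSum (fun s => ρ ^ weight s * w s) x ^ 4 ≤ 2 ^ n * (∑ s, w s ^ 2) ^ 2 := by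
  induction n with
  | zero =>
    simp [walshSum, walsh, weight, ← pow_mul]
  | succ n ih =>
    set w₀ : (Fin n → Bool) → ℝ := fun s => w (Fin.cons false s : Fin (n + 1) → Bool)
    set w₁ : (Fin n → Bool) → ℝ := fun s => w (Fin.cons true s : Fin (n + 1) → Bool)
    have hsplit : ∀ b y, walshSum (fun s => ρ ^ weight s * w s) (Fin.cons b y) =
        walshSum (fun s => ρ ^ weight s * w₀ s) y +
          (if b then -ρ else ρ) * walshSum (fun s => ρ ^ weight s * w₁ s) y := by
      intro b y
      rw [walshSum_cons]
      simp only [weight_cons, walshSum, mul_sum, w₀, w₁]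
      congr 1
      · simp
      · refine sum_congr rfl fun s _ => ?_
        cases b <;> simp <;> ring
    rw [sum_cube_succ, sum_cube_succ fun s => w s ^ 2]
    simp only [hsplit, Bool.false_eq_true, if_false, if_true, neg_mul, ← sub_eq_add_neg]
    have hstep := sum_pow_four_add_sub_le (by positivity)
      (sum_nonneg fun s _ => sq_nonneg (w₀ s)) (sum_nonneg fun s _ => sq_nonneg (w₁ s))
      hρ (ih w₀) (ih w₁)
    refine hstep.trans (le_of_eq ?_)
    rw [sum_add_distrib, pow_succ]
    ring

lemma pow_four_sum_mul_le {ι : Type*} [Fintype ι] (u v : ι → ℝ)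
    (hv : ∀ i, v i = -1 ∨ v i = 0 ∨ v i = 1) :
    (∑ i, u i * v i) ^ 4 ≤ (∑ i, u i ^ 4) * (∑ i, v i ^ 2) ^ 3 := by
  have hv3 : ∀ i, v i ^ 3 = v i := fun i => by rcases hv i with h | h | h <;> norm_num [h]
  have hv4 : ∀ i, (v i ^ 2) ^ 2 = v i ^ 2 := fun i => by
    rcases hv i with h | h | h <;> norm_num [h]
  have hv2 : ∀ i, v i ^ 2 ≤ 1 := fun i => by rcases hv i with h | h | h <;> simp [h]
  have h₁ : (∑ i, u i * v i) ^ 2 ≤ (∑ i, u i ^ 2 * v i ^ 2) * ∑ i, v i ^ 2 := by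
    have hcs := sum_mul_sq_le_sq_mul_sq univ (fun i => u i * v i) (fun i => v i ^ 2)
    simp only [mul_assoc, ← pow_succ', hv3, mul_pow, hv4] at hcs
    exact hcs
  have h₂ : (∑ i, u i ^ 2 * v i ^ 2) ^ 2 ≤ (∑ i, u i ^ 4) * ∑ i, v i ^ 2 := by
    refine (sum_mul_sq_le_sq_mul_sq univ (fun i => u i ^ 2 * v i) v).trans' ?_ |>.trans ?_
    · exact le_of_eq (by congr 1; exact sum_congr rfl fun i _ => by ring)
    · gcongr with i
      nlinarith [hv2 i, pow_nonneg (sq_nonneg (u i)) 2]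
  have h₀ : 0 ≤ ∑ i, v i ^ 2 := sum_nonneg fun i _ => sq_nonneg _
  calc (∑ i, u i * v i) ^ 4 = ((∑ i, u i * v i) ^ 2) ^ 2 := by ring
    _ ≤ ((∑ i, u i ^ 2 * v i ^ 2) * ∑ i, v i ^ 2) ^ 2 := by gcongr
    _ = (∑ i, u i ^ 2 * v i ^ 2) ^ 2 * (∑ i, v i ^ 2) ^ 2 := by ring
    _ ≤ (∑ i, u i ^ 4) * (∑ i, v i ^ 2) * (∑ i, v i ^ 2) ^ 2 := by gcongr
    _ = _ := by ring

noncomputable def derivative (i : Fin n) (g : (Fin n → Bool) → ℝ) (x : Fin n → Bool) : ℝ :=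
  (g (update x i false) - g (update x i true)) / 2

lemma sum_comp_update_not {M : Type*} [AddCommMonoid M] (i : Fin n) (G : (Fin n → Bool) → M) :
    ∑ x, G (update x i (!x i)) = ∑ x, G x :=
  Fintype.sum_equiv (Involutive.toPerm (fun x => update x i (!x i)) fun x => by simp) _ _
    fun _ => rfl

lemma sum_ite_update_true (i : Fin n) (H : (Fin n → Bool) → (Fin n → Bool) → ℝ) :
    ∑ t, (if t i then 0 else H (update t i true) t) =
      ∑ s, if s i then H s (update s i false) else 0 := by
  rw [← sum_comp_update_not i]
  refine sum_congr rfl fun s _ => ?_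
  cases h : s i
  · simp
  · simp [show update s i true = s from h ▸ update_eq_self i s]

lemma walsh_update (s x : Fin n → Bool) (i : Fin n) (b : Bool) :
    walsh s (update x i b) = (if s i && b then -1 else 1) * walsh (update s i false) x := by
  simp only [walsh]
  rw [← mul_prod_erase _ _ (mem_univ i), ← mul_prod_erase _ _ (mem_univ i)]
  simp only [update_self, Bool.false_and, Bool.false_eq_true, if_false, one_mul]
  congr 1
  exact prod_congr rfl fun j hj => by
    rw [update_of_ne (ne_of_mem_erase hj), update_of_ne (ne_of_mem_erase hj)]

lemma derivative_walsh (i : Fin n) (s : Fin n → Bool) :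
    derivative i (walsh s) = fun x => if s i then walsh (update s i false) x else 0 := by
  ext x
  simp only [derivative, walsh_update]
  cases s i <;> norm_num

lemma derivative_walshSum (i : Fin n) (w : (Fin n → Bool) → ℝ) :
    derivative i (walshSum w) = walshSum fun t => if t i then 0 else w (update t i true) := by
  ext x
  have hlin : derivative i (walshSum w) x = ∑ s, w s * derivative i (walsh s) x := by
    simp only [derivative, walshSum, ← sum_sub_distrib, ← mul_sub, sum_div, mul_div_assoc]
  simp only [hlin, derivative_walsh, walshSum, mul_ite, mul_zero, ite_mul, zero_mul]
  exact (sum_ite_update_true i fun s t => w s * walsh t x).symm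

lemma walshCoeff_derivative (i : Fin n) (g : (Fin n → Bool) → ℝ) (t : Fin n → Bool) :
    walshCoeff (derivative i g) t = if t i then 0 else walshCoeff g (update t i true) := by
  conv_lhs => rw [← walshSum_walshCoeff g, derivative_walshSum, walshCoeff_walshSum]

lemma sum_mul_walshCoeff_derivative_sq (i : Fin n) (g : (Fin n → Bool) → ℝ)
    (φ : (Fin n → Bool) → ℝ) :
    ∑ t, φ t * walshCoeff (derivative i g) t ^ 2 =
      ∑ s, if s i then φ (update s i false) * walshCoeff g s ^ 2 else 0 := by
  simp only [walshCoeff_derivative, ite_pow, mul_ite, zero_pow two_ne_zero, mul_zero]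
  exact sum_ite_update_true i fun s t => φ t * walshCoeff g s ^ 2

noncomputable def noiseStability (ρ : ℝ) (g : (Fin n → Bool) → ℝ) : ℝ :=
  ∑ s, ρ ^ weight s * walshCoeff g s ^ 2

lemma sum_sq_eq_sum_walshCoeff_sq (g : (Fin n → Bool) → ℝ) :
    ∑ x, g x ^ 2 = 2 ^ n * ∑ s, walshCoeff g s ^ 2 := by
  simpa only [sq] using sum_mul_eq_sum_walshCoeff_mul g g

theorem sq_noiseStability_quarter_le (g : (Fin n → Bool) → ℝ)
    (hg : ∀ x, g x = -1 ∨ g x = 0 ∨ g x = 1) :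
    noiseStability (1 / 4) g ^ 2 ≤ (∑ s, walshCoeff g s ^ 2) ^ 3 := by
  set S := noiseStability (1 / 4) g
  set W := ∑ s, walshCoeff g s ^ 2
  set w : (Fin n → Bool) → ℝ := fun s => (1 / 2) ^ weight s * walshCoeff g s
  set P := walshSum fun s => (1 / 2) ^ weight s * w s
  have hquarter : ∀ k : ℕ, ((1 : ℝ) / 2) ^ k * (1 / 2) ^ k = (1 / 4) ^ k := fun k => by
    rw [← mul_pow]; norm_num
  have hPg : ∑ x, P x * g x = 2 ^ n * S := by
    rw [sum_walshSum_mul]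
    congr 1
    exact sum_congr rfl fun s _ => by rw [← hquarter]; ring
  have hw : ∑ s, w s ^ 2 = S := sum_congr rfl fun s _ => by rw [← hquarter]; ring
  have hP4 : ∑ x, P x ^ 4 ≤ 2 ^ n * S ^ 2 := hw ▸ bonami (by norm_num) w
  have hholder := pow_four_sum_mul_le P g hg
  rw [hPg, sum_sq_eq_sum_walshCoeff_sq] at hholder
  have hS4 : S ^ 4 ≤ S ^ 2 * W ^ 3 := by
    have h2n : (0 : ℝ) < (2 ^ n) ^ 4 := by positivity
    refine le_of_mul_le_mul_left ?_ h2n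
    calc (2 ^ n) ^ 4 * S ^ 4 = (2 ^ n * S) ^ 4 := by ring
      _ ≤ (∑ x, P x ^ 4) * (2 ^ n * W) ^ 3 := hholder
      _ ≤ 2 ^ n * S ^ 2 * (2 ^ n * W) ^ 3 := by gcongr
      _ = (2 ^ n) ^ 4 * (S ^ 2 * W ^ 3) := by ring
  rcases eq_or_ne S 0 with hS | hS
  · rw [hS, zero_pow two_ne_zero]
    exact pow_nonneg (sum_nonneg fun s _ => sq_nonneg _) 3
  · exact le_of_mul_le_mul_left (by rw [← pow_add]; exact hS4) (by positivity)

lemma sum_ite_le_noiseStability_derivative {ρ : ℝ} (hρ₀ : 0 ≤ ρ) (hρ₁ : ρ ≤ 1) (i : Fin n)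
    (g : (Fin n → Bool) → ℝ) :
    ∑ s, (if s i then ρ ^ weight s * walshCoeff g s ^ 2 else 0) ≤
      noiseStability ρ (derivative i g) := by
  rw [noiseStability, sum_mul_walshCoeff_derivative_sq]
  gcongr with s
  split_ifs
  · exact mul_le_mul_of_nonneg_right
      (pow_le_pow_of_le_one hρ₀ hρ₁ (weight_update_false_le s i)) (sq_nonneg _)
  · exact le_rfl

lemma exp_neg_four_mul_le_two_mul_sum {ι : Type*} [Fintype ι] (d : ι → ℕ) (p : ι → ℝ)
    (hp : ∀ s, 0 ≤ p s) (hp₁ : ∑ s, p s = 1) (hd : ∀ s, d s = 0 → p s = 0) :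
    exp (-4 * ∑ s, d s * p s) ≤ 2 * ∑ s, d s * ((1 / 4) ^ d s * p s) := by
  set M := ∑ s, d s * p s
  have hpd : ∀ s c, 0 ≤ c → c * p s ≤ d s * (c * p s) := fun s c hc => by
    rcases Nat.eq_zero_or_pos (d s) with h | h
    · simp [h, hd s h]
    · exact le_mul_of_one_le_left (by have := hp s; positivity) (by exact_mod_cast h)
  have hM : 1 ≤ M := hp₁ ▸ sum_le_sum fun s _ => by simpa using hpd s 1 zero_le_one
  have hexp : exp (-2) ≤ 1 / 4 := by
    rw [exp_neg, one_div]
    gcongr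
    linarith [quadratic_le_exp_of_nonneg (zero_le_two : (0 : ℝ) ≤ 2)]
  -- summed over `s`, the left side is `exp (-4M) / 2`; the correction term `d s * p s / (2M)`
  -- pays for the levels `d s > 2M`, as in Markov's inequality
  have hterm : ∀ s, exp (-4 * M) * (p s - d s * p s / (2 * M)) ≤ d s * ((1 / 4) ^ d s * p s) := by
    intro s
    by_cases hds : (d s : ℝ) ≤ 2 * M
    · have hpow : exp (-4 * M) ≤ (1 / 4) ^ d s := calc
        exp (-4 * M) ≤ exp (d s * -2) := exp_le_exp.2 (by linarith)
        _ = exp (-2) ^ d s := exp_nat_mul _ _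
        _ ≤ (1 / 4) ^ d s := by gcongr
      calc exp (-4 * M) * (p s - d s * p s / (2 * M)) ≤ exp (-4 * M) * p s := by
            gcongr
            exact sub_le_self _ (by have := hp s; positivity)
        _ ≤ (1 / 4) ^ d s * p s := mul_le_mul_of_nonneg_right hpow (hp s)
        _ ≤ d s * ((1 / 4) ^ d s * p s) := hpd s _ (by positivity)
    · have hneg : p s - d s * p s / (2 * M) ≤ 0 := by
        rw [sub_nonpos, le_div_iff₀ (by positivity)]
        nlinarith [hp s]
      calc exp (-4 * M) * (p s - d s * p s / (2 * M)) ≤ 0 :=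
            mul_nonpos_of_nonneg_of_nonpos (exp_pos _).le hneg
        _ ≤ d s * ((1 / 4) ^ d s * p s) := by have := hp s; positivity
  have hsum := sum_le_sum fun s (_ : s ∈ univ) => hterm s
  rw [← mul_sum, sum_sub_distrib, hp₁, ← sum_div,
    show M / (2 * M) = 1 / 2 by field_simp] at hsum
  linarith

section BooleanFunction

variable (f : (Fin n → Bool) → Bool)

noncomputable def signed (x : Fin n → Bool) : ℝ := if f x then 1 else -1

noncomputable def influence (i : Fin n) : ℝ :=
  ((univ.filter fun x : Fin n → Bool => f x ≠ f (update x i (!(x i)))).card : ℝ) / 2 ^ n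

lemma derivative_signed_mem (i : Fin n) (x : Fin n → Bool) :
    derivative i (signed f) x = -1 ∨ derivative i (signed f) x = 0 ∨
      derivative i (signed f) x = 1 := by
  simp only [derivative, signed]
  split_ifs <;> norm_num

lemma derivative_signed_sq (i : Fin n) (x : Fin n → Bool) :
    derivative i (signed f) x ^ 2 = if f x ≠ f (update x i (!x i)) then 1 else 0 := by
  have hflip : derivative i (signed f) x ^ 2 =
      ((signed f x - signed f (update x i (!x i))) / 2) ^ 2 := by
    cases h : x i
    · simp [derivative, show update x i false = x from h ▸ update_eq_self i x]
    · simp [derivative, show update x i true = x from h ▸ update_eq_self i x]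
      ring
  rw [hflip, signed, signed]
  cases f x <;> cases f (update x i (!x i)) <;> norm_num

lemma influence_eq_sum_walshCoeff_derivative_sq (i : Fin n) :
    influence f i = ∑ t, walshCoeff (derivative i (signed f)) t ^ 2 := by
  have hcard : ((univ.filter fun x : Fin n → Bool => f x ≠ f (update x i (!(x i)))).card : ℝ) =
      ∑ x, derivative i (signed f) x ^ 2 := by
    simp only [derivative_signed_sq, card_filter, Nat.cast_sum, Nat.cast_ite, Nat.cast_one,
      Nat.cast_zero]
  rw [influence, hcard, sum_sq_eq_sum_walshCoeff_sq, mul_div_cancel_left₀ _ (by positivity)]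

lemma influence_eq_sum_walshCoeff_sq (i : Fin n) :
    influence f i = ∑ s, if s i then walshCoeff (signed f) s ^ 2 else 0 := by
  rw [influence_eq_sum_walshCoeff_derivative_sq]
  simpa using sum_mul_walshCoeff_derivative_sq i (signed f) 1

lemma sum_walshCoeff_signed_sq : ∑ s, walshCoeff (signed f) s ^ 2 = 1 := by
  have h := sum_sq_eq_sum_walshCoeff_sq (signed f)
  have hsq : ∀ x, signed f x ^ 2 = 1 := fun x => by unfold signed; split_ifs <;> norm_num
  simp only [hsq, sum_const, card_univ, Fintype.card_pi, Fintype.card_bool, prod_const,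
    Fintype.card_fin, nsmul_eq_mul, mul_one, Nat.cast_pow, Nat.cast_ofNat] at h
  exact (mul_eq_left₀ (by positivity)).1 h.symm

lemma walshCoeff_signed_zero
    (hbal : 2 * (univ.filter fun x : Fin n → Bool => f x = true).card = 2 ^ n) :
    walshCoeff (signed f) (fun _ => false) = 0 := by
  have hsigned : ∀ x, signed f x = 2 * (if f x then 1 else 0) - 1 := fun x => by
    unfold signed; split_ifs <;> norm_num
  have hsum : ∑ x, signed f x = 0 := by
    simp only [hsigned, ← mul_sum, sum_sub_distrib, sum_boole, sum_const, card_univ,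
      Fintype.card_pi, Fintype.card_bool, prod_const, Fintype.card_fin, nsmul_eq_mul, mul_one]
    rw [sub_eq_zero]
    exact_mod_cast hbal
  simp [walshCoeff, walsh, hsum]

lemma noiseStability_derivative_signed_le (i : Fin n) {τ : ℝ} (hτ : influence f i ≤ τ) :
    noiseStability (1 / 4) (derivative i (signed f)) ≤ √τ * influence f i := by
  have hI := influence_eq_sum_walshCoeff_derivative_sq f i
  have hsq := sq_noiseStability_quarter_le _ (derivative_signed_mem f i)
  rw [← hI] at hsq
  have hI₀ : 0 ≤ influence f i := by rw [hI]; positivity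
  have hcube : influence f i ^ 3 ≤ τ * influence f i ^ 2 := by
    rw [pow_succ, mul_comm]
    exact mul_le_mul_of_nonneg_right hτ (sq_nonneg _)
  calc _ ≤ |noiseStability (1 / 4) (derivative i (signed f))| := le_abs_self _
    _ ≤ √(τ * influence f i ^ 2) := abs_le_sqrt (hsq.trans hcube)
    _ = √τ * influence f i := by rw [sqrt_mul' _ (sq_nonneg _), sqrt_sq hI₀]

theorem exp_neg_four_mul_sum_influence_le
    (hbal : 2 * (univ.filter fun x : Fin n → Bool => f x = true).card = 2 ^ n)
    {τ : ℝ} (hτ : ∀ i, influence f i ≤ τ) :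
    exp (-4 * ∑ i, influence f i) ≤ 2 * (√τ * ∑ i, influence f i) := by
  set a := walshCoeff (signed f)
  have htotal : ∑ i, influence f i = ∑ s, weight s * a s ^ 2 := by
    simp_rw [influence_eq_sum_walshCoeff_sq]
    exact sum_sum_ite_eq_sum_weight_mul _
  calc exp (-4 * ∑ i, influence f i) ≤ 2 * ∑ s, weight s * ((1 / 4) ^ weight s * a s ^ 2) := by
        rw [htotal]
        refine exp_neg_four_mul_le_two_mul_sum weight (fun s => a s ^ 2) (fun s => sq_nonneg _)
          (sum_walshCoeff_signed_sq f) fun s hs => ?_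
        simp [a, eq_false_of_weight_eq_zero hs, walshCoeff_signed_zero f hbal]
    _ = 2 * ∑ i, ∑ s, (if s i then (1 / 4) ^ weight s * a s ^ 2 else 0) := by
        rw [sum_sum_ite_eq_sum_weight_mul]
    _ ≤ 2 * ∑ i, noiseStability (1 / 4) (derivative i (signed f)) := by
        gcongr with i
        exact sum_ite_le_noiseStability_derivative (by norm_num) (by norm_num) i _
    _ ≤ 2 * ∑ i, √τ * influence f i := by
        gcongr with i
        exact noiseStability_derivative_signed_le f i (hτ i)
    _ = 2 * (√τ * ∑ i, influence f i) := by rw [← mul_sum]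

end BooleanFunction

lemma two_mul_sqrt_mul_le_exp {L : ℝ} (hL : 0 ≤ L) :
    2 * (√(1 / 16 * L / exp L) * (L / 16)) ≤ exp (-4 * (L / 16)) := by
  have hcube : L ^ 3 ≤ 48 * exp (L / 2) := by
    have := pow_div_factorial_le_exp (L / 2) (by positivity) 3
    norm_num [Nat.factorial] at this
    linarith
  rw [← pow_le_pow_iff_left₀ (by positivity) (by positivity) two_ne_zero]
  calc (2 * (√(1 / 16 * L / exp L) * (L / 16))) ^ 2 = L ^ 3 / 1024 / exp L := by
        rw [mul_pow, mul_pow, sq_sqrt (by positivity)]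
        ring
    _ ≤ exp (L / 2) / exp L := by gcongr; linarith [exp_pos (L / 2)]
    _ = exp (-4 * (L / 16)) ^ 2 := by
        rw [← exp_sub, sq, ← exp_add]
        ring_nf

end BooleanFourier

open BooleanFourier

/-- Kahn–Kalai–Linial: every balanced Boolean function on `{-1,1}ⁿ` has a coordinate of
influence at least `c · log n / n`. Here the influence of coordinate `i` is the
probability that flipping the `i`-th bit changes the value of `f`. -/
theorem kahn_kalai_linial :
    ∃ c : ℝ, 0 < c ∧
      ∀ (n : ℕ) (f : (Fin n → Bool) → Bool), 2 ≤ n →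
        2 * (Finset.univ.filter fun x : Fin n → Bool => f x = true).card = 2 ^ n →
        ∃ i : Fin n,
          c * Real.log n / n ≤
            ((Finset.univ.filter fun x : Fin n → Bool =>
                f x ≠ f (Function.update x i (!(x i)))).card : ℝ) / 2 ^ n := by
  refine ⟨1 / 16, by norm_num, fun n f hn hbal => ?_⟩
  by_contra! hsmall
  have hn₀ : (0 : ℝ) < n := by exact_mod_cast (by omega : 0 < n)
  have hL : 0 < log n := log_pos (by exact_mod_cast hn)
  have hM : ∑ i, influence f i < log n / 16 := calc
    _ < ∑ _i : Fin n, 1 / 16 * log n / n :=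
        sum_lt_sum_of_nonempty (univ_nonempty_iff.2 ⟨⟨0, by omega⟩⟩) fun i _ => hsmall i
    _ = log n / 16 := by
        rw [sum_const, card_univ, Fintype.card_fin, nsmul_eq_mul]
        field_simp
  have hM₀ : 0 ≤ ∑ i, influence f i := sum_nonneg fun i _ => by unfold influence; positivity
  have hkkl := exp_neg_four_mul_sum_influence_le f hbal fun i => (hsmall i).le
  have hnum := two_mul_sqrt_mul_le_exp hL.le
  rw [exp_log hn₀] at hnum
  have hexp : exp (-4 * (log n / 16)) < exp (-4 * ∑ i, influence f i) := exp_lt_exp.2 (by linarith)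
  have hsqrt : 2 * (√(1 / 16 * log n / n) * ∑ i, influence f i) ≤
      2 * (√(1 / 16 * log n / n) * (log n / 16)) := by gcongr
  linarith
end
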